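/- arXiv:1410.8412 — 9 statements merged into one kernel-verified Lean document; each statement's English description precedes it below -/
import Mathlib

section
/- Let G be a constructible graph with dominating order < and domination map δ. For ν ≥ 1 define ρ_ν(μ) = δ^{k(ν,μ)}(μ) where k(ν,μ) = min{k ∈ ℕ : δ^k(μ) < ν}. Then ρ_ν is a retraction from G onto G_{<ν}, i.e., ρ_ν is a graph homomorphism (of reflexive graphs) fixing G_{<ν} pointwise. -/
structure RefGraph (V : Type*) where
  Adj : V → V → Prop
  symm : ∀ u v, Adj u v → Adj v u
  refl : ∀ v, Adj v v

/-- Domination map associated to the well-order on `V` (constructibility data). -/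
def IsDomMap {V : Type*} [LinearOrder V] [OrderBot V] (G : RefGraph V) (δ : V → V) : Prop :=
  δ ⊥ = ⊥ ∧ ∀ ν, ν ≠ ⊥ → δ ν < ν ∧ G.Adj (δ ν) ν ∧
    ∀ η, η ≤ ν → G.Adj ν η → G.Adj (δ ν) η

/-- for `ν ≥ 1` (i.e. `⊥ < ν`), the map
`ρ_ν(μ) = δ^[k(ν,μ)] μ`, where `k(ν,μ)` is minimal with `δ^[k] μ < ν`, is well defined
and is a retraction from `G` onto the subgraph `G_{<ν}` induced by the vertices `< ν`:
it maps into `G_{<ν}`, fixes `G_{<ν}` pointwise, and is a graph homomorphism of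
reflexive graphs (adjacent vertices go to adjacent vertices, equal images being
allowed via loops). -/
theorem rho_is_retraction {V : Type*} [LinearOrder V] [OrderBot V] [WellFoundedLT V]
    (G : RefGraph V) (δ : V → V) (hδ : IsDomMap G δ) (ν : V) (hν : ⊥ < ν)
    (ρ : V → V)
    (hρ : ∀ μ, ∃ k : ℕ, ρ μ = δ^[k] μ ∧ δ^[k] μ < ν ∧ ∀ j < k, ¬ δ^[j] μ < ν) :
    (∀ μ, ∃ k : ℕ, δ^[k] μ < ν) ∧
    (∀ μ, ρ μ < ν) ∧
    (∀ μ, μ < ν → ρ μ = μ) ∧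
    (∀ u w, G.Adj u w → G.Adj (ρ u) (ρ w)) := by
  obtain ⟨hbot, hδ'⟩ := hδ
  have hfix : ∀ μ, μ < ν → ρ μ = μ := by
    intro μ hμ
    obtain ⟨k, hk, -, hmin⟩ := hρ μ
    cases k with
    | zero => simpa using hk
    | succ n => exact absurd hμ (by simpa using hmin 0 (Nat.succ_pos n))
  have hlt : ∀ μ, ρ μ < ν := by
    intro μ
    obtain ⟨k, hk, h1, -⟩ := hρ μ
    rw [hk]; exact h1
  have hstep : ∀ μ, ¬ μ < ν → ρ μ = ρ (δ μ) := by
    intro μ hμ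
    obtain ⟨k, hk, h1, hmin⟩ := hρ μ
    obtain ⟨k', hk', h1', hmin'⟩ := hρ (δ μ)
    cases k with
    | zero => exact absurd (by simpa using h1) hμ
    | succ n =>
      have e : ∀ j : ℕ, δ^[j] (δ μ) = δ^[j + 1] μ := by
        intro j
        rw [Function.iterate_succ_apply]
      have h1n : δ^[n] (δ μ) < ν := by rw [e]; exact h1
      have hkn : k' = n := by
        have h2 : k' ≤ n := le_of_not_gt fun h => hmin' n h h1n
        have h3 : n ≤ k' := by
          by_contra h
          push_neg at h
          exact hmin (k' + 1) (Nat.succ_lt_succ h) (by rw [← e]; exact h1')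
        exact le_antisymm h2 h3
      rw [hk, hk', e, hkn]
  have hex : ∀ μ, ∃ k : ℕ, δ^[k] μ < ν := by
    intro μ
    induction μ using WellFoundedLT.induction with
    | _ μ IH =>
      by_cases h : μ < ν
      · exact ⟨0, h⟩
      · have hμb : μ ≠ ⊥ := fun e => h (e ▸ hν)
        obtain ⟨k, hk⟩ := IH (δ μ) (hδ' μ hμb).1
        exact ⟨k + 1, by rwa [Function.iterate_succ_apply]⟩
  have key : ∀ u w, w ≤ u → G.Adj u w → G.Adj (ρ u) (ρ w) := by
    intro u
    induction u using WellFoundedLT.induction with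
    | _ u IH =>
      intro w hw hadj
      by_cases hu : u < ν
      · rw [hfix u hu, hfix w (lt_of_le_of_lt hw hu)]; exact hadj
      · rcases eq_or_lt_of_le hw with rfl | hwu
        · exact G.refl _
        · have hub : u ≠ ⊥ := fun e => hu (e ▸ hν)
          obtain ⟨hd1, hd2, hd3⟩ := hδ' u hub
          have hAdj : G.Adj (δ u) w := hd3 w (le_of_lt hwu) hadj
          rw [hstep u hu]
          rcases le_total w (δ u) with h | h
          · exact IH (δ u) hd1 w h hAdj
          · exact G.symm _ _ (IH w hwu (δ u) h (G.symm _ _ hAdj))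
  refine ⟨hex, hlt, hfix, fun u w h => ?_⟩
  rcases le_total w u with hle | hle
  · exact key u w hle h
  · exact G.symm _ _ (key w u hle (G.symm _ _ h))
end

section
/- A locally finite connected constructible graph admits a natural dominating order, i.e., a dominating order of order type at most ω. Hence a locally finite graph is constructible if and only if it admits a dominating order order-isomorphic to an initial segment of ℕ. -/
/-- `r` (a strict order relation) is a dominating order for `G`: every vertex `ν`
which is not minimal is dominated in `G_{≤ν}` by some earlier vertex `μ`:
`μ` is adjacent to `ν` and to every neighbour of `ν` among the vertices `≤ ν`. -/
def IsDomOrder {V : Type*} (G : RefGraph V) (r : V → V → Prop) : Prop :=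
  ∀ ν, (∃ μ, r μ ν) →
    ∃ μ, r μ ν ∧ G.Adj μ ν ∧ ∀ η, (r η ν ∨ η = ν) → G.Adj ν η → G.Adj μ η

/-- `G` is constructible: some well order of the vertex set is a dominating order. -/
def Constructible {V : Type*} (G : RefGraph V) : Prop :=
  ∃ r : V → V → Prop, IsWellOrder V r ∧ IsDomOrder G r

/-- `G` is locally finite: every vertex has finitely many neighbours. -/
def GraphLocFin {V : Type*} (G : RefGraph V) : Prop :=
  ∀ v, {u | G.Adj u v}.Finite

/-!
Let `<` be a dominating well order of a locally finite graph. Following smaller neighbours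
from any vertex one reaches the least vertex (each non-minimal vertex has a dominating,
hence adjacent, smaller vertex), so the graph is connected and therefore countable; and by
König's lemma the set of vertices reachable from a vertex `w` along descending edges is finite.
Enumerating the vertices as `w₀, w₁, …`, give `v` the rank of the first `wₖ` from which it is
reachable in this way. Ordering by rank first and by `<` second yields a well order with finite
initial segments, hence of type at most `ω`, which agrees with `<` on every edge and has the
same least vertex; such an order is still dominating.
-/

open Relation Function

namespace Relation

variable {α : Type*} {R : α → α → Prop}

theorem countable_setOf_reflTransGen (hR : ∀ a, {b | R a b}.Finite) (a : α) :
    {b | ReflTransGen R a b}.Countable := by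
  let ball : ℕ → Set α := fun n => Nat.rec {a} (fun _ B => ⋃ x ∈ B, {b | R x b}) n
  have ball_finite : ∀ n, (ball n).Finite := by
    intro n
    induction n with
    | zero => exact Set.finite_singleton a
    | succ n ih => exact ih.biUnion fun x _ => hR x
  have exists_mem_ball : ∀ b, ReflTransGen R a b → ∃ n, b ∈ ball n := by
    intro b hab
    induction hab with
    | refl => exact ⟨0, rfl⟩
    | tail _ hbc ih =>
      obtain ⟨n, hn⟩ := ih
      exact ⟨n + 1, Set.mem_biUnion hn hbc⟩
  refine (Set.countable_iUnion fun n => (ball_finite n).countable).mono fun b hb => ?_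
  exact Set.mem_iUnion.2 (exists_mem_ball b hb)

theorem finite_setOf_reflTransGen (hR : ∀ a, {b | R a b}.Finite) (hwf : WellFounded (flip R))
    (a : α) : {b | ReflTransGen R a b}.Finite := by
  induction a using hwf.induction with
  | _ a ih =>
    refine (((hR a).biUnion fun b hb => ih b hb).insert a).subset fun c hc => ?_
    rcases ReflTransGen.cases_head hc with rfl | ⟨b, hab, hbc⟩
    · exact Set.mem_insert _ _
    · exact Set.mem_insert_of_mem _ (Set.mem_biUnion hab hbc)

theorem exists_rank_of_finite_reflTransGen [Countable α]
    (hR : ∀ a, {b | ReflTransGen R a b}.Finite) :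
    ∃ rank : α → ℕ, (∀ a b, ReflTransGen R a b → rank b ≤ rank a) ∧
      ∀ n, {a | rank a ≤ n}.Finite := by
  rcases isEmpty_or_nonempty α with hα | hα
  · exact ⟨fun _ => 0, fun a => isEmptyElim a, fun _ => Set.toFinite _⟩
  classical
  obtain ⟨e, he⟩ := exists_surjective_nat α
  have hcover : ∀ a, ∃ k, ReflTransGen R (e k) a := fun a =>
    (he a).imp fun k (hk : e k = a) => hk ▸ ReflTransGen.refl
  refine ⟨fun a => Nat.find (hcover a),
    fun a b hab => Nat.find_min' _ ((Nat.find_spec (hcover a)).trans hab), fun n => ?_⟩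
  refine ((Set.finite_Iic n).biUnion fun k _ => hR (e k)).subset fun a ha => ?_
  exact Set.mem_biUnion (Set.mem_Iic.2 ha) (Nat.find_spec (hcover a))

end Relation

theorem exists_injective_nat_of_finite_lt {α : Type*} {s : α → α → Prop}
    [IsStrictTotalOrder α s] (hs : ∀ a, {b | s b a}.Finite) :
    ∃ f : α → ℕ, Injective f ∧ ∀ a b, s a b ↔ f a < f b := by
  have hlt : ∀ a b, s a b → {c | s c a}.ncard < {c | s c b}.ncard := fun a b hab =>
    Set.ncard_lt_ncard ⟨fun c hc => trans_of s hc hab, fun h => irrefl_of s a (h hab)⟩ (hs b)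
  refine ⟨fun a => {c | s c a}.ncard, fun a b hab => ?_, fun a b => ⟨hlt a b, fun h => ?_⟩⟩
  · rcases trichotomous_of s a b with h | h | h
    · exact absurd hab (hlt a b h).ne
    · exact h
    · exact absurd hab (hlt b a h).ne'
  · rcases trichotomous_of s a b with h' | rfl | h'
    · exact h'
    · exact absurd h (lt_irrefl _)
    · exact absurd h (hlt b a h').not_gt

theorem Prod.lex_rank_iff_of_le {α : Type*} {r : α → α → Prop} [Std.Trichotomous r]
    (rank : α → ℕ) {u v : α} (huv : r u v → rank u ≤ rank v) (hvu : r v u → rank v ≤ rank u) :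
    Prod.Lex (· < ·) r (rank u, u) (rank v, v) ↔ r u v := by
  rw [Prod.lex_def]
  refine ⟨fun h => ?_, fun h => (huv h).lt_or_eq.imp_right fun heq => ⟨heq, h⟩⟩
  rcases h with hlt | ⟨-, h⟩
  · rcases trichotomous_of r u v with h | rfl | h
    · exact h
    · exact absurd hlt (lt_irrefl _)
    · exact absurd (hvu h) hlt.not_ge
  · exact h

namespace RefGraph

variable {V : Type*} (G : RefGraph V)

def LowerAdj (r : V → V → Prop) (u v : V) : Prop :=
  r v u ∧ G.Adj u v

theorem finite_setOf_lowerAdj (hlf : GraphLocFin G) (r : V → V → Prop) (u : V) :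
    {v | G.LowerAdj r u v}.Finite :=
  (hlf u).subset fun v h => G.symm u v h.2

theorem finite_setOf_swap_lowerAdj (hlf : GraphLocFin G) (r : V → V → Prop) (u : V) :
    {v | swap (G.LowerAdj r) u v}.Finite :=
  (hlf u).subset fun _ h => h.2

end RefGraph

section

variable {V : Type*} {G : RefGraph V}

theorem IsDomOrder.of_adj_iff {r s : V → V → Prop} (hr : IsDomOrder G r)
    (hadj : ∀ u v, G.Adj u v → (r u v ↔ s u v)) (hmin : ∀ ν, (∃ μ, s μ ν) → ∃ μ, r μ ν) :
    IsDomOrder G s := by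
  intro ν hν
  obtain ⟨μ, hμν, hμ, hdom⟩ := hr ν (hmin ν hν)
  refine ⟨μ, (hadj μ ν hμ).1 hμν, hμ, fun η hη hνη => hdom η ?_ hνη⟩
  exact hη.imp_left (hadj η ν (G.symm ν η hνη)).2

theorem IsDomOrder.reflTransGen_lowerAdj_of_minimal {r : V → V → Prop} [IsWellOrder V r]
    (hr : IsDomOrder G r) {ν : V} (hν : ∀ μ, ¬r μ ν) (w : V) :
    ReflTransGen (G.LowerAdj r) w ν := by
  induction w using (IsWellFounded.wf : WellFounded r).induction with
  | _ w ih =>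
    rcases trichotomous_of r ν w with h | rfl | h
    · obtain ⟨μ, hμw, hμ, -⟩ := hr w ⟨ν, h⟩
      exact ReflTransGen.head ⟨hμw, G.symm μ w hμ⟩ (ih μ hμw)
    · exact ReflTransGen.refl
    · exact absurd h (hν w)

theorem Constructible.countable (hlf : GraphLocFin G) (hG : Constructible G) : Countable V := by
  obtain ⟨r, hwo, hr⟩ := hG
  rcases isEmpty_or_nonempty V with hV | ⟨⟨v⟩⟩
  · infer_instance
  obtain ⟨ν, -, hν⟩ := hwo.wf.has_min Set.univ ⟨v, trivial⟩
  refine Set.countable_univ_iff.1 <|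
    (countable_setOf_reflTransGen (G.finite_setOf_swap_lowerAdj hlf r) ν).mono fun w _ => ?_
  exact reflTransGen_swap.2 (hr.reflTransGen_lowerAdj_of_minimal (fun μ => hν μ trivial) w)

theorem Constructible.exists_natural_domOrder (hlf : GraphLocFin G) (hG : Constructible G) :
    ∃ f : V → ℕ, Injective f ∧ IsDomOrder G (fun u v => f u < f v) := by
  have := hG.countable hlf
  obtain ⟨r, hwo, hr⟩ := hG
  obtain ⟨rank, hrank, hfin⟩ := exists_rank_of_finite_reflTransGen (R := G.LowerAdj r) fun u =>
    finite_setOf_reflTransGen (G.finite_setOf_lowerAdj hlf r) (hwo.wf.mono fun _ _ h => h.1) u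
  let s : V → V → Prop := (fun v => (rank v, v)) ⁻¹'o Prod.Lex (· < ·) r
  have hs : IsWellOrder V s :=
    (RelEmbedding.preimage ⟨_, fun _ _ h => congrArg Prod.snd h⟩ _).isWellOrder
  have hs_rank : ∀ μ ν, s μ ν → rank μ ≤ rank ν := fun μ ν h =>
    (Prod.lex_def.1 h).elim le_of_lt fun h => h.1.le
  obtain ⟨f, hf, hfs⟩ := exists_injective_nat_of_finite_lt (s := s) fun ν =>
    (hfin (rank ν)).subset fun μ hμ => hs_rank μ ν hμ
  have hlower : ∀ u v, G.Adj u v → r u v → rank u ≤ rank v := fun u v huv h =>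
    hrank v u (ReflTransGen.single ⟨h, G.symm u v huv⟩)
  refine ⟨f, hf, hr.of_adj_iff (fun u v huv => ?_) fun ν ⟨μ, hμ⟩ => ?_⟩
  · exact ((Prod.lex_rank_iff_of_le rank (hlower u v huv) (hlower v u (G.symm u v huv))).symm.trans
      (hfs u v))
  · by_contra! hν
    have hle := hrank μ ν (hr.reflTransGen_lowerAdj_of_minimal hν μ)
    rcases Prod.lex_def.1 ((hfs μ ν).2 hμ) with hlt | ⟨-, h⟩
    · exact hlt.not_ge hle
    · exact hν μ h

theorem constructible_of_natural_domOrder {f : V → ℕ} (hf : Injective f)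
    (hdom : IsDomOrder G (fun u v => f u < f v)) : Constructible G :=
  ⟨_, (RelEmbedding.preimage ⟨f, hf⟩ (· < ·)).isWellOrder, hdom⟩

end

/-- a locally finite graph is constructible if and only if it admits a
natural dominating order, i.e. a dominating order order-isomorphic to an initial
segment of ℕ (equivalently, one induced by an injection of the vertices into ℕ). -/
theorem constructible_iff_natural_dominating_order {V : Type*}
    (G : RefGraph V) (hlf : GraphLocFin G) :
    Constructible G ↔
      ∃ f : V → ℕ, Function.Injective f ∧ IsDomOrder G (fun u v => f u < f v) :=
  ⟨fun hG => hG.exists_natural_domOrder hlf,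
    fun ⟨_, hf, hdom⟩ => constructible_of_natural_domOrder hf hdom⟩
end

section
/- Every finite cop-win graph is constructible: if the cop has a winning strategy on a finite reflexive graph G, then G admits a dominating order. -/
/-- The sequence of cop positions when the cop starts at `c0`, plays the
(positional) strategy `S`, and the robber's positions are given by `rb`
(`rb 0` is the robber's starting vertex, chosen after seeing `c0`;
the cop's `(n+1)`-st position responds to the robber's position `rb n`). -/
def copSeq {V : Type*} (S : V → V → V) (c0 : V) (rb : ℕ → V) : ℕ → V
  | 0 => c0
  | n + 1 => S (copSeq S c0 rb n) (rb n)

/-- A legal robber play: consecutive positions are adjacent (staying put is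
allowed since graphs are reflexive). -/
def LegalPlay {V : Type*} (G : RefGraph V) (rb : ℕ → V) : Prop :=
  ∀ n, G.Adj (rb n) (rb (n + 1))

/-- The cop playing `S` from `c0` catches the robber play `rb`: at some point
cop and robber occupy the same vertex. -/
def Catches {V : Type*} (S : V → V → V) (c0 : V) (rb : ℕ → V) : Prop :=
  ∃ n, copSeq S c0 rb n = rb n ∨ copSeq S c0 rb (n + 1) = rb n

/-- `(c0, S)` is a winning strategy for the cop on `G`: all moves are legal and
every legal robber play is caught after finitely many rounds. -/
def WinningStrat {V : Type*} (G : RefGraph V) (c0 : V) (S : V → V → V) : Prop :=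
  (∀ c r, G.Adj c (S c r)) ∧ ∀ rb : ℕ → V, LegalPlay G rb → Catches S c0 rb

/-- `G` is cop-win: the cop has a winning strategy. -/
def CopWin {V : Type*} (G : RefGraph V) : Prop :=
  ∃ (c0 : V) (S : V → V → V), WinningStrat G c0 S

/-!
Call a position winning for the cop inside `A` if he can force a capture while both players stay
in the subgraph induced on `A`. Against a winning strategy from `c₀` every robber start is winning
for the cop inside the whole graph: from any other position the robber can always move to another
such position, and so escape forever.

If no vertex of `A` is dominated by another one, the cop only ever catches a robber he is already
adjacent to, so a cop-win `A` with at least two vertices has a vertex `u` dominated by some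
`w ≠ u`. Folding `u` onto `w` is a retraction, and retractions preserve being cop-win; by
induction `A \ {u}` carries a dominating order, which `u` extends as a new largest vertex.
-/

namespace RefGraph

variable {V : Type*} (G : RefGraph V)

/-- `G.CopCatches A x y`: in the subgraph induced on `A`, the cop on `y`, who is to move, can
force a capture of the robber on `x`. -/
inductive CopCatches (A : Set V) : V → V → Prop
  | capture {x y : V} : G.Adj y x → CopCatches A x y
  | move {x y : V} (y' : V) : y' ∈ A → G.Adj y y' →
      (∀ x' ∈ A, G.Adj x x' → CopCatches A x' y') → CopCatches A x y

def IsCopWinOn (A : Set V) : Prop :=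
  ∃ y₀ ∈ A, ∀ x ∈ A, G.CopCatches A x y₀

def Dominates (A : Set V) (w u : V) : Prop :=
  ∀ z ∈ A, G.Adj u z → G.Adj w z

variable {G}

theorem Dominates.mono {A B : Set V} {w u : V} (h : G.Dominates A w u) (hBA : B ⊆ A) :
    G.Dominates B w u :=
  fun z hz => h z (hBA hz)

section Game

variable {S : V → V → V}

/-- Positions of robber and cop, with the cop to move, when the cop plays `S` and the robber
answers with `R`. -/
def chase (S R : V → V → V) (x₀ c₀ : V) : ℕ → V × V
  | 0 => (x₀, c₀)
  | n + 1 =>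
    let p := chase S R x₀ c₀ n
    (R p.1 p.2, S p.2 p.1)

theorem copSeq_chase (R : V → V → V) (x₀ c₀ : V) (n : ℕ) :
    copSeq S c₀ (fun k => (chase S R x₀ c₀ k).1) n = (chase S R x₀ c₀ n).2 := by
  induction n with
  | zero => rfl
  | succ n ih => rw [copSeq, ih]; rfl

theorem exists_adj_not_copCatches (hS : ∀ c r, G.Adj c (S c r)) {x y : V}
    (h : ¬ G.CopCatches Set.univ x y) :
    ∃ x', G.Adj x x' ∧ ¬ G.CopCatches Set.univ x' (S y x) := by
  by_contra! hall
  exact h (.move (S y x) trivial (hS y x) fun x' _ hxx' => hall x' hxx')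

theorem copCatches_of_winningStrat {c₀ : V} (hS : WinningStrat G c₀ S) (x₀ : V) :
    G.CopCatches Set.univ x₀ c₀ := by
  by_contra h₀
  have hflee : ∀ x y, ∃ x', ¬ G.CopCatches Set.univ x y →
      G.Adj x x' ∧ ¬ G.CopCatches Set.univ x' (S y x) := fun x y =>
    (em _).elim (fun h => ⟨x, absurd h⟩)
      fun h => (exists_adj_not_copCatches hS.1 h).imp fun _ hx' _ => hx'
  choose R hR using hflee
  set play := chase S R x₀ c₀
  have hsafe : ∀ n, ¬ G.CopCatches Set.univ (play n).1 (play n).2 := by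
    intro n
    induction n with
    | zero => exact h₀
    | succ n ih => exact (hR _ _ ih).2
  obtain ⟨n, hn⟩ := hS.2 (fun n => (play n).1) fun n => (hR _ _ (hsafe n)).1
  have hcop : ∀ k, copSeq S c₀ (fun n => (play n).1) k = (play k).2 := copSeq_chase R x₀ c₀
  simp only [hcop] at hn
  apply hsafe n
  rcases hn with h | h
  · exact .capture (h ▸ G.refl _)
  · exact .capture (h ▸ hS.1 _ _)

end Game

section Dismantling

variable {A B : Set V} {φ : V → V}

structure IsRetraction (G : RefGraph V) (A B : Set V) (φ : V → V) : Prop where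
  subset : B ⊆ A
  mapsTo : Set.MapsTo φ A B
  adj : ∀ x ∈ A, ∀ y ∈ A, G.Adj x y → G.Adj (φ x) (φ y)
  fixed : ∀ x ∈ B, φ x = x

/-- The cop plays the image under `φ` of his strategy against the robber on `B`. -/
theorem CopCatches.retract (hφ : G.IsRetraction A B φ) {x y : V}
    (h : G.CopCatches A x y) (hx : x ∈ B) (hy : y ∈ A) : G.CopCatches B x (φ y) := by
  induction h with
  | capture hyx =>
    exact .capture (hφ.fixed _ hx ▸ hφ.adj _ hy _ (hφ.subset hx) hyx)
  | move y' hy' hyy' _ ih =>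
    exact .move (φ y') (hφ.mapsTo hy') (hφ.adj _ hy _ hy' hyy')
      fun x' hx' hxx' => ih x' (hφ.subset hx') hxx' hx' hy'

theorem IsCopWinOn.retract (h : G.IsCopWinOn A) (hφ : G.IsRetraction A B φ) :
    G.IsCopWinOn B := by
  obtain ⟨y₀, hy₀, hall⟩ := h
  exact ⟨φ y₀, hφ.mapsTo hy₀, fun x hx => (hall x (hφ.subset hx)).retract hφ hx hy₀⟩

theorem isRetraction_of_dominates [DecidableEq V] {u w : V} (hw : w ∈ A) (hwu : w ≠ u)
    (hdom : G.Dominates A w u) :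
    G.IsRetraction A (A \ {u}) (fun y => if y = u then w else y) where
  subset := Set.sdiff_subset
  mapsTo y hy := by
    by_cases h : y = u
    · simpa [h] using ⟨hw, hwu⟩
    · simpa [h] using hy
  adj x hx y hy hxy := by
    by_cases hx' : x = u <;> by_cases hy' : y = u <;> simp only [hx', hy', if_true, if_false]
    · exact G.refl w
    · exact hdom y hy (hx' ▸ hxy)
    · exact G.symm _ _ (hdom x hx (G.symm _ _ (hy' ▸ hxy)))
    · exact hxy
  fixed x hx := if_neg hx.2

theorem CopCatches.adj_of_forall_not_dominates
    (hnd : ∀ u ∈ A, ∀ w ∈ A, w ≠ u → ¬ G.Dominates A w u) {x y : V}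
    (h : G.CopCatches A x y) (hx : x ∈ A) (hy : y ∈ A) : G.Adj y x := by
  induction h with
  | capture hyx => exact hyx
  | @move x y y' hy' hyy' _ ih =>
    have hdom : G.Dominates A y' x := fun z hz hxz => ih z hz hxz hz hy'
    by_cases hxy' : y' = x
    · exact hxy' ▸ hyy'
    · exact absurd hdom (hnd x hx y' hy' hxy')

theorem IsCopWinOn.exists_dominates (h : G.IsCopWinOn A) (hA : A.Nontrivial) :
    ∃ u ∈ A, ∃ w ∈ A, w ≠ u ∧ G.Dominates A w u := by
  by_contra! hnd
  obtain ⟨y₀, hy₀, hall⟩ := h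
  have hadj : ∀ x ∈ A, G.Adj y₀ x := fun x hx =>
    (hall x hx).adj_of_forall_not_dominates hnd hx hy₀
  obtain ⟨x, hx, hxy₀⟩ := hA.exists_ne y₀
  exact hnd x hx y₀ hy₀ (Ne.symm hxy₀) fun z hz _ => hadj z hz

end Dismantling

section DominatingRank

def IsDominatingRank (G : RefGraph V) (A : Finset V) (f : V → ℕ) : Prop :=
  Set.InjOn f A ∧ ∀ ν ∈ A, (∃ μ ∈ A, f μ < f ν) →
    ∃ μ ∈ A, f μ < f ν ∧ G.Dominates {η | η ∈ A ∧ f η ≤ f ν} μ ν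

theorem isDominatingRank_of_card_le_one {A : Finset V} (hA : A.card ≤ 1) (f : V → ℕ) :
    G.IsDominatingRank A f := by
  rw [Finset.card_le_one] at hA
  exact ⟨fun a ha b hb _ => hA a ha b hb,
    fun ν hν ⟨μ, hμ, hlt⟩ => absurd hlt (by rw [hA μ hμ ν hν]; exact lt_irrefl _)⟩

theorem IsDominatingRank.insert_dominated [DecidableEq V] {B : Finset V} {f : V → ℕ} {u w : V}
    (hf : G.IsDominatingRank B f) (hu : u ∉ B) (hw : w ∈ B)
    (hdom : G.Dominates ↑(insert u B) w u) :
    G.IsDominatingRank (insert u B) (Function.update f u (B.sup f + 1)) := by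
  set N := B.sup f + 1
  set g := Function.update f u N
  have hgu : g u = N := Function.update_self _ _ _
  have hg : ∀ v ∈ B, g v = f v ∧ f v < N := fun v hv =>
    ⟨Function.update_of_ne (ne_of_mem_of_not_mem hv hu) _ _,
      Nat.lt_succ_of_le (Finset.le_sup hv)⟩
  have hbelow : ∀ ν ∈ B, ∀ η ∈ insert u B, g η ≤ g ν → η ∈ B ∧ g η = f η := by
    intro ν hν η hη hην
    rcases Finset.mem_insert.1 hη with rfl | hη
    · have := hg ν hν; omega
    · exact ⟨hη, (hg η hη).1⟩
  refine ⟨?_, fun ν hν ⟨μ, hμ, hμν⟩ => ?_⟩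
  · rw [Finset.coe_insert, Set.injOn_insert (by simpa using hu)]
    refine ⟨hf.1.congr fun v hv => (hg v hv).1.symm, fun ⟨v, hv, hvu⟩ => ?_⟩
    have := hg v hv; omega
  rcases Finset.mem_insert.1 hν with rfl | hν
  · refine ⟨w, Finset.mem_insert_of_mem hw, ?_, hdom.mono fun η hη => hη.1⟩
    have := hg w hw; omega
  have hν' := hg ν hν
  obtain ⟨hμB, hgμ⟩ := hbelow ν hν μ hμ hμν.le
  obtain ⟨μ', hμ', hμ'ν, hdom'⟩ := hf.2 ν hν ⟨μ, hμB, by omega⟩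
  refine ⟨μ', Finset.mem_insert_of_mem hμ', by have := hg μ' hμ'; omega, hdom'.mono ?_⟩
  rintro η ⟨hη, hην⟩
  obtain ⟨hηB, hgη⟩ := hbelow ν hν η hη hην
  exact ⟨hηB, by omega⟩

theorem IsCopWinOn.exists_isDominatingRank [DecidableEq V] {A : Finset V} (hA : G.IsCopWinOn A) :
    ∃ f, G.IsDominatingRank A f := by
  induction A using Finset.strongInduction with
  | H A ih =>
  rcases le_or_gt A.card 1 with hcard | hcard
  · exact ⟨0, isDominatingRank_of_card_le_one hcard 0⟩
  obtain ⟨u, hu, w, hw, hwu, hdom⟩ :=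
    hA.exists_dominates (Finset.one_lt_card_iff_nontrivial.1 hcard)
  have hA' : G.IsCopWinOn ↑(A.erase u) := by
    rw [Finset.coe_erase]
    exact hA.retract (isRetraction_of_dominates hw hwu hdom)
  obtain ⟨f, hf⟩ := ih _ (Finset.erase_ssubset hu) hA'
  rw [← Finset.insert_erase hu] at hdom ⊢
  exact ⟨_, hf.insert_dominated (Finset.notMem_erase u A) (Finset.mem_erase.2 ⟨hwu, hw⟩) hdom⟩

theorem IsDominatingRank.constructible [Fintype V] {f : V → ℕ}
    (hf : G.IsDominatingRank Finset.univ f) : Constructible G := by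
  have hinj : Function.Injective f := by
    rw [← Set.injOn_univ, ← Finset.coe_univ]
    exact hf.1
  refine ⟨fun μ ν => f μ < f ν, (RelEmbedding.preimage ⟨f, hinj⟩ (· < ·)).isWellOrder, ?_⟩
  intro ν ⟨μ, hμν⟩
  obtain ⟨μ', -, hμ'ν, hdom⟩ := hf.2 ν (Finset.mem_univ ν) ⟨μ, Finset.mem_univ μ, hμν⟩
  refine ⟨μ', hμ'ν, hdom ν ⟨Finset.mem_univ ν, le_rfl⟩ (G.refl ν), fun η hη => ?_⟩
  refine hdom η ⟨Finset.mem_univ η, ?_⟩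
  rcases hη with hη | rfl
  exacts [hη.le, le_rfl]

end DominatingRank

end RefGraph

/-- every finite cop-win graph is constructible. -/
theorem constructible_of_copWin {V : Type*} [Fintype V] (G : RefGraph V)
    (h : CopWin G) : Constructible G := by
  classical
  obtain ⟨c₀, S, hS⟩ := h
  have hcopWin : G.IsCopWinOn ↑(Finset.univ : Finset V) :=
    ⟨c₀, by simp, fun x _ => by simpa using RefGraph.copCatches_of_winningStrat hS x⟩
  obtain ⟨f, hf⟩ := hcopWin.exists_isDominatingRank
  exact hf.constructible
end

section
/- Every finite constructible graph is cop-win: if a finite reflexive graph admits a dominating order then the cop has a winning strategy. -/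
/-!
Fix a dominating well order and fold every vertex onto an earlier vertex dominating it, the last
ones first: the composite `π_t` of the folds of all vertices after `t` is a homomorphism of `G`
onto the vertices up to `t`. As the vertex dominating `t⁺` (the successor of `t`) is adjacent to
every neighbour of `t⁺` up to `t⁺`, a step `x ~ x'` of the robber gives `π_t x ~ π_{t⁺} x'`: a cop
standing on the robber's shadow `π_t x` can move onto his next shadow `π_{t⁺} x'`. Starting at the
least vertex, the shadow of everything, the cop stands on the robber himself after at most `|V|`
moves. A bound on the length of the game gives a memoryless strategy: always move so as to
decrease the least number of moves in which a capture can be forced.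
-/

namespace RefGraph

variable {V : Type*} (G : RefGraph V)

/-- `G.CopWinsIn n c x`: a cop at `c`, to move against a robber at `x`, can force a capture
within `n` moves. -/
def CopWinsIn : ℕ → V → V → Prop
  | 0, _, _ => False
  | n + 1, c, x => ∃ c', G.Adj c c' ∧ (c' = x ∨ ∀ x', G.Adj x x' → CopWinsIn n c' x')

open Classical in
noncomputable def rankStrategy (c x : V) : V :=
  if h : ∃ n, G.CopWinsIn (n + 1) c x then (Nat.find_spec h).choose else c

variable {G}

theorem adj_rankStrategy (c x : V) : G.Adj c (G.rankStrategy c x) := by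
  classical
  unfold rankStrategy
  split_ifs with h
  · exact (Nat.find_spec h).choose_spec.1
  · exact G.refl c

theorem rankStrategy_spec {n : ℕ} {c x : V} (h : G.CopWinsIn (n + 1) c x) :
    ∃ m ≤ n, G.rankStrategy c x = x ∨
      ∀ x', G.Adj x x' → G.CopWinsIn m (G.rankStrategy c x) x' := by
  classical
  have hex : ∃ n, G.CopWinsIn (n + 1) c x := ⟨n, h⟩
  refine ⟨Nat.find hex, Nat.find_min' hex h, ?_⟩
  unfold rankStrategy
  rw [dif_pos hex]
  exact (Nat.find_spec hex).choose_spec.2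

theorem catches_rankStrategy {c₀ : V} {rb : ℕ → V} (hrb : LegalPlay G rb) {n k : ℕ}
    (h : G.CopWinsIn n (copSeq G.rankStrategy c₀ rb k) (rb k)) :
    Catches G.rankStrategy c₀ rb := by
  induction n using Nat.strong_induction_on generalizing k with
  | _ n ih =>
    cases n with
    | zero => exact h.elim
    | succ n =>
      obtain ⟨m, hmn, hcaught | hnext⟩ := rankStrategy_spec h
      · exact ⟨k, Or.inr hcaught⟩
      · exact ih m (Nat.lt_succ_of_le hmn) (k := k + 1) (hnext _ (hrb k))

theorem copWin_of_forall_copWinsIn (c₀ : V) (h : ∀ x, ∃ n, G.CopWinsIn n c₀ x) : CopWin G := by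
  refine ⟨c₀, G.rankStrategy, adj_rankStrategy, fun rb hrb => ?_⟩
  obtain ⟨n, hn⟩ := h (rb 0)
  exact catches_rankStrategy (k := 0) hrb hn

variable (G) in
def ShadowCatchable (A : Set V) : Prop :=
  ∃ π : V → V, (∀ x y, G.Adj x y → G.Adj (π x) (π y)) ∧ (∀ x, π x ∈ A) ∧
    ∃ n, ∀ c x, G.Adj c (π x) → G.CopWinsIn n c x

theorem ShadowCatchable.mono {A B : Set V} (h : G.ShadowCatchable A) (hAB : A ⊆ B) :
    G.ShadowCatchable B := by
  obtain ⟨π, hπ, hπA, hwin⟩ := h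
  exact ⟨π, hπ, fun x => hAB (hπA x), hwin⟩

theorem shadowCatchable_univ : G.ShadowCatchable Set.univ :=
  ⟨id, fun _ _ h => h, fun _ => Set.mem_univ _, 1, fun _ x hcx => ⟨x, hcx, Or.inl rfl⟩⟩

theorem adj_update_of_dominates [DecidableEq V] {B : Set V} {t μ u v : V}
    (hdom : ∀ η ∈ B, G.Adj t η → G.Adj μ η) (hv : v ∈ B) (huv : G.Adj u v) :
    G.Adj (Function.update id t μ u) v := by
  by_cases hut : u = t
  · subst hut
    simpa using hdom v hv huv
  · simpa [Function.update_of_ne hut] using huv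

theorem ShadowCatchable.fold {A : Set V} {t μ : V} (h : G.ShadowCatchable (insert t A))
    (hμ : μ ∈ A) (hdom : ∀ η ∈ insert t A, G.Adj t η → G.Adj μ η) :
    G.ShadowCatchable A := by
  classical
  obtain ⟨π, hπ, hπA, n, hwin⟩ := h
  set ρ := Function.update id t μ
  have hρA : ∀ u ∈ insert t A, ρ u ∈ A := by
    intro u hu
    by_cases hut : u = t
    · simpa [ρ, hut] using hμ
    · simpa [ρ, Function.update_of_ne hut, hut] using hu
  have hρπ : ∀ x y, G.Adj x y → G.Adj (ρ (π x)) (π y) := fun x y hxy =>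
    adj_update_of_dominates hdom (hπA y) (hπ x y hxy)
  refine ⟨ρ ∘ π, fun x y hxy => ?_, fun x => hρA _ (hπA x), n + 1, fun c x hcx => ?_⟩
  · have hyx := G.symm _ _ (hρπ x y hxy)
    exact G.symm _ _ (adj_update_of_dominates hdom (Set.mem_insert_of_mem _ (hρA _ (hπA x))) hyx)
  · exact ⟨ρ (π x), hcx, Or.inr fun x' hxx' => hwin _ _ (hρπ x x' hxx')⟩

theorem copWin_of_shadowCatchable_singleton {c₀ : V} (h : G.ShadowCatchable {c₀}) :
    CopWin G := by
  obtain ⟨π, -, hπ, n, hwin⟩ := h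
  refine copWin_of_forall_copWinsIn c₀ fun x => ⟨n, hwin c₀ x ?_⟩
  rw [Set.eq_of_mem_singleton (hπ x)]
  exact G.refl c₀

theorem mem_insert_setOf_of_not_rel {r : V → V → Prop} [Std.Trichotomous r] {t x : V}
    (h : ¬ r t x) : x ∈ insert t {x | r x t} := by
  rcases trichotomous_of r x t with hxt | rfl | htx
  · exact Or.inr hxt
  · exact Or.inl rfl
  · exact (h htx).elim

theorem shadowCatchable_of_isDomOrder [Finite V] {r : V → V → Prop} [IsWellOrder V r]
    (hd : IsDomOrder G r) (t : V) : G.ShadowCatchable (insert t {x | r x t}) := by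
  induction t using (Finite.wellFounded_of_trans_of_irrefl (Function.swap r)).induction with
  | _ t ih =>
    by_cases htop : ∃ s, r t s
    · obtain ⟨s, hts, hmin⟩ := (IsWellFounded.wf : WellFounded r).has_min _ htop
      obtain ⟨μ, hμs, -, hdom⟩ := hd s ⟨t, hts⟩
      exact ((ih s hts).fold hμs fun η hη => hdom η hη.symm).mono fun x hxs =>
        mem_insert_setOf_of_not_rel fun htx => hmin x htx hxs
    · exact shadowCatchable_univ.mono fun x _ =>
        mem_insert_setOf_of_not_rel fun htx => htop ⟨x, htx⟩

end RefGraph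

/-- every finite constructible graph is cop-win. -/
theorem copWin_of_constructible {V : Type*} [Fintype V] [Nonempty V] (G : RefGraph V)
    (h : Constructible G) : CopWin G := by
  obtain ⟨r, hwo, hd⟩ := h
  obtain ⟨t₀, -, hmin⟩ := hwo.wf.has_min Set.univ Set.univ_nonempty
  refine RefGraph.copWin_of_shadowCatchable_singleton (c₀ := t₀)
    ((RefGraph.shadowCatchable_of_isDomOrder hd t₀).mono ?_)
  rintro x (rfl | hxt)
  · rfl
  · exact (hmin x (Set.mem_univ x) hxt).elim
end

section
/- A finite reflexive graph is cop-win if and only if it is constructible. -/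
/-!
Given a dominating order, rank the vertices along it and let `shadow k x` be the first vertex of
rank at most `k` on the chain `x, parent x, parent (parent x), …` of dominators. Each `shadow k`
is a retraction onto the vertices of rank at most `k`, and for adjacent `u, u'` the vertices
`shadow k u` and `shadow (k + 1) u'` are adjacent. So a cop next to some shadow of the robber can
always step to a strictly higher shadow of the robber's new position; the level rises every
round until it reaches the top, where the shadow is the robber itself.

Conversely, folding a dominated vertex onto a vertex dominating it is a retraction, so removing
dominated vertices one at a time always leaves a retract `K` of `G`. If this gets stuck with two
or more vertices, the robber wins by staying in `K` and never being adjacent to the image of the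
cop under the retraction: since no vertex of `K` dominates another, he can always escape. Hence
on a cop-win graph the process ends at a single vertex, and the removal order, reversed, is a
dominating order.
-/

open Finset

theorem RefGraph.Adj.symm {V : Type*} {G : RefGraph V} {u v : V} (h : G.Adj u v) : G.Adj v u :=
  G.symm u v h

section Game

variable {V : Type*} {G : RefGraph V}

theorem exists_legalPlay_not_catches {S : V → V → V} {c0 : V} (P : V → V → Prop)
    (hstart : ∃ r, P c0 r) (hne : ∀ c r, P c r → c ≠ r)
    (hstep : ∀ c r, P c r → S c r ≠ r ∧ ∃ r', G.Adj r r' ∧ P (S c r) r') :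
    ∃ rb, LegalPlay G rb ∧ ¬ Catches S c0 rb := by
  obtain ⟨r0, hr0⟩ := hstart
  have escape : ∀ c r, ∃ r', P c r → G.Adj r r' ∧ P (S c r) r' := fun c r => by
    by_cases h : P c r
    · obtain ⟨r', hr'⟩ := (hstep c r h).2
      exact ⟨r', fun _ => hr'⟩
    · exact ⟨r, fun h' => absurd h' h⟩
  choose esc hesc using escape
  let play : ℕ → V × V := fun n =>
    Nat.rec (c0, r0) (fun _ p => (S p.1 p.2, esc p.1 p.2)) n
  let rb : ℕ → V := fun n => (play n).2
  have hcop : ∀ n, copSeq S c0 rb n = (play n).1 := by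
    intro n
    induction n with
    | zero => rfl
    | succ n ih => simp only [copSeq, ih]; rfl
  have hP : ∀ n, P (play n).1 (play n).2 := by
    intro n
    induction n with
    | zero => exact hr0
    | succ n ih => exact (hesc _ _ ih).2
  refine ⟨rb, fun n => (hesc _ _ (hP n)).1, ?_⟩
  rintro ⟨n, hcatch | hcatch⟩
  · exact hne _ _ (hP n) (by rw [← hcop]; exact hcatch)
  · exact (hstep _ _ (hP n)).1 (by simpa only [copSeq, hcop] using hcatch)

theorem copWin_of_shadows [Nonempty V] (ψ : ℕ → V → V) (n : ℕ)
    (hψ0 : ∀ x y, ψ 0 x = ψ 0 y) (hψn : ∀ x, ψ n x = x)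
    (hψ : ∀ k u u', G.Adj u u' → G.Adj (ψ k u) (ψ (k + 1) u')) : CopWin G := by
  classical
  let level (c x : V) : ℕ := Nat.findGreatest (fun j => G.Adj c (ψ j x)) n
  let S (c x : V) : V := if G.Adj c (ψ (level c x) x) then ψ (level c x) x else c
  have hS : ∀ c x j, j ≤ n → G.Adj c (ψ j x) → ∃ j', j ≤ j' ∧ j' ≤ n ∧ S c x = ψ j' x := by
    intro c x j hj hadj
    have hlevel : G.Adj c (ψ (level c x) x) :=
      Nat.findGreatest_spec (P := fun j => G.Adj c (ψ j x)) hj hadj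
    exact ⟨level c x, Nat.le_findGreatest hj hadj, Nat.findGreatest_le n, if_pos hlevel⟩
  have hSlegal : ∀ c x, G.Adj c (S c x) := fun c x => by
    by_cases h : G.Adj c (ψ (level c x) x)
    · simpa only [S, if_pos h] using h
    · simpa only [S, if_neg h] using G.refl c
  let c0 : V := ψ 0 (Classical.arbitrary V)
  refine ⟨c0, S, hSlegal, fun rb hrb => ?_⟩
  by_contra hnc
  have hchase : ∀ m, ∃ j, m ≤ j ∧ j ≤ n ∧ G.Adj (copSeq S c0 rb m) (ψ j (rb m)) := by
    intro m
    induction m with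
    | zero =>
      refine ⟨0, le_rfl, Nat.zero_le n, ?_⟩
      simpa only [copSeq, c0, hψ0 _ (rb 0)] using G.refl _
    | succ m ih =>
      obtain ⟨j, hmj, hjn, hadj⟩ := ih
      obtain ⟨j', hjj', hj'n, hcop⟩ := hS _ _ j hjn hadj
      have hj'n : j' < n := by
        refine lt_of_le_of_ne hj'n fun hj' => hnc ⟨m, Or.inr ?_⟩
        rw [copSeq, hcop, hj', hψn]
      exact ⟨j' + 1, by omega, hj'n, by rw [copSeq, hcop]; exact hψ j' _ _ (hrb m)⟩
  obtain ⟨j, hj, hjn, -⟩ := hchase (n + 1)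
  omega

end Game

structure Dismantling {V : Type*} (G : RefGraph V) where
  rank : V → ℕ
  rank_injective : Function.Injective rank
  parent : V → V
  rank_parent_lt : ∀ x, 0 < rank x → rank (parent x) < rank x
  adj_parent_of_adj : ∀ x, 0 < rank x → ∀ y, rank y ≤ rank x → G.Adj x y → G.Adj (parent x) y

namespace Dismantling

variable {V : Type*} {G : RefGraph V} (D : Dismantling G)

def shadow (k : ℕ) (x : V) : V :=
  if D.rank x ≤ k then x else shadow k (D.parent x)
termination_by D.rank x
decreasing_by exact D.rank_parent_lt x (by omega)

theorem shadow_of_le {k : ℕ} {x : V} (h : D.rank x ≤ k) : D.shadow k x = x := by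
  rw [shadow, if_pos h]

theorem shadow_of_lt {k : ℕ} {x : V} (h : k < D.rank x) :
    D.shadow k x = D.shadow k (D.parent x) := by
  rw [shadow, if_neg (not_le.2 h)]

theorem rank_shadow_le (k : ℕ) (x : V) : D.rank (D.shadow k x) ≤ k := by
  by_cases h : D.rank x ≤ k
  · rwa [D.shadow_of_le h]
  · have := D.rank_parent_lt x (by omega)
    rw [D.shadow_of_lt (not_le.1 h)]
    exact rank_shadow_le k (D.parent x)
termination_by D.rank x

theorem shadow_shadow {k l : ℕ} (hkl : k ≤ l) (x : V) :
    D.shadow k (D.shadow l x) = D.shadow k x := by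
  by_cases h : D.rank x ≤ l
  · rw [D.shadow_of_le h]
  · have := D.rank_parent_lt x (by omega)
    rw [D.shadow_of_lt (not_le.1 h), D.shadow_of_lt (k := k) (x := x) (by omega)]
    exact shadow_shadow hkl (D.parent x)
termination_by D.rank x

theorem adj_shadow (k : ℕ) {u u' : V} (h : G.Adj u u') :
    G.Adj (D.shadow k u) (D.shadow k u') := by
  rcases le_total (D.rank u) (D.rank u') with hle | hle
  · by_cases hk : D.rank u' ≤ k
    · rwa [D.shadow_of_le hk, D.shadow_of_le (hle.trans hk)]
    · have := D.rank_parent_lt u' (by omega)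
      rw [D.shadow_of_lt (x := u') (not_le.1 hk)]
      exact adj_shadow k (D.adj_parent_of_adj u' (by omega) u hle h.symm).symm
  · by_cases hk : D.rank u ≤ k
    · rwa [D.shadow_of_le hk, D.shadow_of_le (hle.trans hk)]
    · have := D.rank_parent_lt u (by omega)
      rw [D.shadow_of_lt (x := u) (not_le.1 hk)]
      exact adj_shadow k (D.adj_parent_of_adj u (by omega) u' hle h)
termination_by D.rank u + D.rank u'

theorem adj_shadow_succ (k : ℕ) {u u' : V} (h : G.Adj u u') :
    G.Adj (D.shadow k u) (D.shadow (k + 1) u') := by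
  set y := D.shadow (k + 1) u
  have hy : D.rank y ≤ k + 1 := D.rank_shadow_le _ _
  have hyy' : G.Adj y (D.shadow (k + 1) u') := D.adj_shadow (k + 1) h
  rw [← D.shadow_shadow k.le_succ u]
  by_cases hk : D.rank y ≤ k
  · rwa [D.shadow_of_le hk]
  · have := D.rank_parent_lt y (by omega)
    rw [D.shadow_of_lt (not_le.1 hk), D.shadow_of_le (by omega)]
    have hy' := D.rank_shadow_le (k + 1) u'
    exact D.adj_parent_of_adj y (by omega) _ (by omega) hyy'

end Dismantling

theorem Dismantling.copWin {V : Type*} [Fintype V] [Nonempty V] {G : RefGraph V}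
    (D : Dismantling G) : CopWin G :=
  copWin_of_shadows D.shadow (univ.sup D.rank)
    (fun x y => D.rank_injective <| by
      have := D.rank_shadow_le 0 x
      have := D.rank_shadow_le 0 y
      omega)
    (fun x => D.shadow_of_le (le_sup (mem_univ x)))
    (fun k _ _ h => D.adj_shadow_succ k h)

theorem card_filter_rel_lt_card_filter_rel_iff {V : Type*} [Fintype V] {r : V → V → Prop}
    [IsStrictTotalOrder V r] [DecidableRel r] {a b : V} :
    #{x | r x a} < #{x | r x b} ↔ r a b := by
  constructor
  · intro h
    rcases trichotomous_of r a b with hab | rfl | hba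
    · exact hab
    · exact absurd h (lt_irrefl _)
    · refine absurd h (not_lt.2 (card_le_card fun x hx => ?_))
      simp only [mem_filter, mem_univ, true_and] at hx ⊢
      exact _root_.trans hx hba
  · intro hab
    refine card_lt_card ⟨fun x hx => ?_, fun hsub => irrefl_of r a ?_⟩
    · simp only [mem_filter, mem_univ, true_and] at hx ⊢
      exact _root_.trans hx hab
    · simpa using hsub (by simpa using hab)

theorem Constructible.nonempty_dismantling {V : Type*} [Fintype V] {G : RefGraph V}
    (h : Constructible G) : Nonempty (Dismantling G) := by
  classical
  obtain ⟨r, hr, hdom⟩ := h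
  have hparent : ∀ x, ∃ μ, (∃ μ', r μ' x) →
      r μ x ∧ ∀ η, (r η x ∨ η = x) → G.Adj x η → G.Adj μ η := fun x => by
    by_cases hx : ∃ μ', r μ' x
    · obtain ⟨μ, hμ, -, hμdom⟩ := hdom x hx
      exact ⟨μ, fun _ => ⟨hμ, hμdom⟩⟩
    · exact ⟨x, fun h => absurd h hx⟩
  choose parent hparent using hparent
  let rank (x : V) : ℕ := #{y | r y x}
  have rank_lt_iff {a b : V} : rank a < rank b ↔ r a b :=
    card_filter_rel_lt_card_filter_rel_iff (r := r)
  have rank_le_iff {a b : V} : rank a ≤ rank b ↔ r a b ∨ a = b := by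
    rw [← not_lt, rank_lt_iff]
    rcases trichotomous_of r a b with h | rfl | h
    · exact iff_of_true (asymm h) (Or.inl h)
    · exact iff_of_true (irrefl a) (Or.inr rfl)
    · refine iff_of_false (not_not.2 h) ?_
      rintro (h' | rfl)
      exacts [asymm h h', irrefl a h]
  have rank_pos {x : V} (hx : 0 < rank x) : ∃ μ, r μ x := by
    obtain ⟨μ, hμ⟩ := card_pos.1 hx
    exact ⟨μ, by simpa using hμ⟩
  exact ⟨{
    rank := rank
    rank_injective := fun a b hab => by
      rcases rank_le_iff.1 hab.le with h | h
      · exact absurd hab (rank_lt_iff.2 h).ne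
      · exact h
    parent := parent
    rank_parent_lt := fun x hx => rank_lt_iff.2 (hparent x (rank_pos hx)).1
    adj_parent_of_adj := fun x hx y hy => (hparent x (rank_pos hx)).2 y (rank_le_iff.1 hy) }⟩

section Retract

variable {V : Type*} {G : RefGraph V}

def Dominates (G : RefGraph V) (A : Finset V) (μ u : V) : Prop :=
  ∀ η ∈ A, G.Adj u η → G.Adj μ η

def IsRetract (G : RefGraph V) (A : Finset V) : Prop :=
  ∃ π : V → V, (∀ x, π x ∈ A) ∧ (∀ x ∈ A, π x = x) ∧ ∀ x y, G.Adj x y → G.Adj (π x) (π y)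

theorem isRetract_univ [Fintype V] : IsRetract G univ :=
  ⟨id, fun x => mem_univ x, fun _ _ => rfl, fun _ _ h => h⟩

theorem IsRetract.erase [DecidableEq V] {A : Finset V} {u μ : V} (hA : IsRetract G A)
    (hμ : μ ∈ A.erase u) (hdom : Dominates G A μ u) : IsRetract G (A.erase u) := by
  obtain ⟨π, hπA, hπfix, hπadj⟩ := hA
  let fold (x : V) : V := if x = u then μ else x
  have fold_adj : ∀ x ∈ A, ∀ y ∈ A, G.Adj x y → G.Adj (fold x) (fold y) := by
    intro x hx y hy h
    by_cases hxu : x = u <;> by_cases hyu : y = u <;>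
      simp only [fold, hxu, hyu, if_true, if_false]
    · exact G.refl μ
    · exact hdom y hy (hxu ▸ h)
    · exact (hdom x hx (hyu ▸ h.symm)).symm
    · exact h
  refine ⟨fun x => fold (π x), fun x => ?_, fun x hx => ?_, fun x y h => ?_⟩
  · by_cases hxu : π x = u
    · simpa only [fold, hxu, if_true] using hμ
    · simpa only [fold, hxu, if_false] using mem_erase.2 ⟨hxu, hπA x⟩
  · obtain ⟨hxu, hxA⟩ := mem_erase.1 hx
    simp only [fold, hπfix x hxA, hxu, if_false]
  · exact fold_adj _ (hπA x) _ (hπA y) (hπadj x y h)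

theorem IsRetract.not_copWin {K : Finset V} (hK : IsRetract G K) (hcard : 1 < #K)
    (hcorner : ∀ u ∈ K, ∀ μ ∈ K, μ ≠ u → ¬ Dominates G K μ u) : ¬ CopWin G := by
  obtain ⟨π, hπK, hπfix, hπadj⟩ := hK
  have escape : ∀ r ∈ K, ∀ c, π c ≠ r → ∃ r', r' ∈ K ∧ G.Adj r r' ∧ ¬ G.Adj (π c) r' :=
    fun r hr c hc => by simpa [Dominates] using hcorner r hr (π c) (hπK c) hc
  rintro ⟨c0, S, hSlegal, hwin⟩
  have hmove : ∀ c r, r ∈ K → ¬ G.Adj (π c) r → π (S c r) ≠ r := fun c r _ hcr hSr =>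
    hcr (hSr ▸ hπadj _ _ (hSlegal c r))
  obtain ⟨rb, hrb, hnc⟩ := exists_legalPlay_not_catches (G := G) (S := S) (c0 := c0)
    (fun c r => r ∈ K ∧ ¬ G.Adj (π c) r)
    (by
      obtain ⟨u, hu, hne⟩ := exists_mem_ne hcard (π c0)
      obtain ⟨r, hr, -, hr0⟩ := escape u hu c0 hne.symm
      exact ⟨r, hr, hr0⟩)
    (fun c r ⟨hr, hcr⟩ hcr' => hcr (by rw [hcr', hπfix r hr]; exact G.refl r))
    (fun c r ⟨hr, hcr⟩ => ⟨fun hSr => hmove c r hr hcr (by rw [hSr, hπfix r hr]),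
      by
        obtain ⟨r', hr', hrr', hcr'⟩ := escape r hr (S c r) (hmove c r hr hcr)
        exact ⟨r', hrr', hr', hcr'⟩⟩)
  exact hnc (hwin rb hrb)

end Retract

section DomRanking

variable {V : Type*} {G : RefGraph V}

def IsDomRanking (G : RefGraph V) (A : Finset V) (ρ : V → ℕ) : Prop :=
  Set.InjOn ρ A ∧ ∀ ν ∈ A, (∃ μ ∈ A, ρ μ < ρ ν) →
    ∃ μ ∈ A, ρ μ < ρ ν ∧ ∀ η ∈ A, ρ η ≤ ρ ν → G.Adj ν η → G.Adj μ η

theorem isDomRanking_of_card_le_one {A : Finset V} (hA : #A ≤ 1) :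
    IsDomRanking G A fun _ => 0 :=
  ⟨fun x hx y hy _ => card_le_one.1 hA x hx y hy, fun _ _ ⟨_, _, h⟩ => absurd h (lt_irrefl 0)⟩

theorem IsDomRanking.congr {A : Finset V} {ρ ρ' : V → ℕ} (h : IsDomRanking G A ρ)
    (hρ : ∀ x ∈ A, ρ' x = ρ x) : IsDomRanking G A ρ' := by
  refine ⟨fun x hx y hy hxy => h.1 hx hy (by rwa [← hρ x hx, ← hρ y hy]), ?_⟩
  rintro ν hν ⟨μ, hμ, hμν⟩
  rw [hρ μ hμ, hρ ν hν] at hμν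
  obtain ⟨μ', hμ', hμ'ν, hdom⟩ := h.2 ν hν ⟨μ, hμ, hμν⟩
  refine ⟨μ', hμ', by rwa [hρ μ' hμ', hρ ν hν], fun η hη hην => hdom η hη ?_⟩
  rwa [← hρ η hη, ← hρ ν hν]

theorem IsDomRanking.of_erase [DecidableEq V] {A : Finset V} {ρ : V → ℕ} {u μ : V}
    (h : IsDomRanking G (A.erase u) ρ) (hu : u ∈ A) (htop : ∀ x ∈ A.erase u, ρ x < ρ u)
    (hμ : μ ∈ A.erase u) (hdom : Dominates G A μ u) : IsDomRanking G A ρ := by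
  have mem_erase_of_le {x ν : V} (hν : ν ∈ A.erase u) (hx : x ∈ A) (hxν : ρ x ≤ ρ ν) :
      x ∈ A.erase u :=
    mem_erase.2 ⟨fun hxu => absurd (htop ν hν) (hxu ▸ hxν).not_gt, hx⟩
  refine ⟨fun x hx y hy hxy => ?_, fun ν hν hlower => ?_⟩
  · by_cases hxu : x = u <;> by_cases hyu : y = u
    · exact hxu.trans hyu.symm
    · exact absurd hxy (hxu ▸ htop y (mem_erase.2 ⟨hyu, hy⟩)).ne'
    · exact absurd hxy (hyu ▸ htop x (mem_erase.2 ⟨hxu, hx⟩)).ne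
    · exact h.1 (mem_erase.2 ⟨hxu, hx⟩) (mem_erase.2 ⟨hyu, hy⟩) hxy
  by_cases hνu : ν = u
  · subst hνu
    exact ⟨μ, mem_of_mem_erase hμ, htop μ hμ, fun η hη _ => hdom η hη⟩
  · have hν' : ν ∈ A.erase u := mem_erase.2 ⟨hνu, hν⟩
    obtain ⟨μ₀, hμ₀, hμ₀ν⟩ := hlower
    obtain ⟨μ', hμ', hμ'ν, hμ'dom⟩ :=
      h.2 ν hν' ⟨μ₀, mem_erase_of_le hν' hμ₀ hμ₀ν.le, hμ₀ν⟩
    exact ⟨μ', mem_of_mem_erase hμ', hμ'ν, fun η hη hην =>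
      hμ'dom η (mem_erase_of_le hν' hη hην) hην⟩

theorem IsDomRanking.exists_of_erase [DecidableEq V] {A : Finset V} {ρ : V → ℕ} {u μ : V}
    (h : IsDomRanking G (A.erase u) ρ) (hu : u ∈ A) (hμ : μ ∈ A.erase u)
    (hdom : Dominates G A μ u) : ∃ ρ', IsDomRanking G A ρ' := by
  let ρ' : V → ℕ := Function.update ρ u ((A.erase u).sup ρ + 1)
  have hρ' : ∀ x ∈ A.erase u, ρ' x = ρ x := fun x hx =>
    Function.update_of_ne (ne_of_mem_erase hx) _ _
  refine ⟨ρ', (h.congr hρ').of_erase hu (fun x hx => ?_) hμ hdom⟩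
  simpa [ρ', hρ' x hx] using Nat.lt_succ_of_le (le_sup hx)

theorem IsDomRanking.constructible [Fintype V] {ρ : V → ℕ} (h : IsDomRanking G univ ρ) :
    Constructible G := by
  have hinj : Function.Injective ρ := fun x y hxy => h.1 (mem_univ x) (mem_univ y) hxy
  refine ⟨fun a b => ρ a < ρ b, (RelEmbedding.mk ⟨ρ, hinj⟩ Iff.rfl).isWellOrder, ?_⟩
  rintro ν ⟨μ, hμν⟩
  obtain ⟨μ', -, hμ'ν, hdom⟩ := h.2 ν (mem_univ ν) ⟨μ, mem_univ μ, hμν⟩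
  refine ⟨μ', hμ'ν, hdom ν (mem_univ ν) le_rfl (G.refl ν), fun η hην => ?_⟩
  exact hdom η (mem_univ η) (by rcases hην with h | rfl; exacts [h.le, le_rfl])

end DomRanking

theorem CopWin.constructible {V : Type*} [Fintype V] {G : RefGraph V} (hG : CopWin G) :
    Constructible G := by
  classical
  suffices ∀ A : Finset V, IsRetract G A → ∃ ρ, IsDomRanking G A ρ by
    obtain ⟨ρ, hρ⟩ := this univ isRetract_univ
    exact hρ.constructible
  intro A
  induction A using strongInduction with
  | H A ih =>
    intro hA
    by_cases hcorner : ∃ u ∈ A, ∃ μ ∈ A, μ ≠ u ∧ Dominates G A μ u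
    · obtain ⟨u, hu, μ, hμ, hμu, hdom⟩ := hcorner
      have hμ' : μ ∈ A.erase u := mem_erase.2 ⟨hμu, hμ⟩
      obtain ⟨ρ, hρ⟩ := ih _ (erase_ssubset hu) (hA.erase hμ' hdom)
      exact hρ.exists_of_erase hu hμ' hdom
    · have hcard : #A ≤ 1 := not_lt.1 fun hcard => hA.not_copWin hcard
        (fun u hu μ hμ hμu hdom => hcorner ⟨u, hu, μ, hμ, hμu, hdom⟩) hG
      exact ⟨_, isDomRanking_of_card_le_one hcard⟩

/-- a finite reflexive graph is cop-win if and only if it is constructible. -/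
theorem copWin_iff_constructible {V : Type*} [Fintype V] [Nonempty V] (G : RefGraph V) :
    CopWin G ↔ Constructible G :=
  ⟨CopWin.constructible, fun h => h.nonempty_dismantling.some.copWin⟩
end

section
/- If G is a finite cop-win reflexive graph and r is a vertex dominated by some vertex c, then G − r is cop-win. -/
/-- The induced (reflexive) subgraph of `G` on a set `S` of vertices. -/
def RefGraph.induce {V : Type*} (G : RefGraph V) (S : Set V) : RefGraph S where
  Adj u v := G.Adj u.1 v.1
  symm u v h := G.symm _ _ h
  refl v := G.refl _

/-- AUX -/
def Win {V : Type*} (G : RefGraph V) : ℕ → V → V → Prop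
  | 0, u, ρ => u = ρ
  | k + 1, u, ρ => u = ρ ∨ ∃ u', G.Adj u u' ∧ (u' = ρ ∨ ∀ ρ', G.Adj ρ ρ' → Win G k u' ρ')

lemma win_succ {V : Type*} (G : RefGraph V) :
    ∀ k u ρ, Win G k u ρ → Win G (k + 1) u ρ := by
  intro k
  induction k with
  | zero => intro u ρ h; exact Or.inl h
  | succ k ih =>
      intro u ρ h
      rcases h with h | ⟨u', ha, h⟩
      · exact Or.inl h
      · exact Or.inr ⟨u', ha, h.imp id (fun hh ρ' hρ' => ih _ _ (hh ρ' hρ'))⟩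

lemma win_mono {V : Type*} (G : RefGraph V) {k m : ℕ} (hkm : k ≤ m) {u ρ : V}
    (h : Win G k u ρ) : Win G m u ρ := by
  induction hkm with
  | refl => exact h
  | step _ ih => exact win_succ G _ _ _ ih

noncomputable def winRank {V : Type*} (G : RefGraph V) (u ρ : V) : ℕ :=
  sInf {k | Win G k u ρ}

lemma win_step {V : Type*} (G : RefGraph V) {u ρ : V}
    (h : ∃ k, Win G k u ρ) (hne : u ≠ ρ) :
    ∃ u', G.Adj u u' ∧
      (u' = ρ ∨ ∀ ρ', G.Adj ρ ρ' → Win G (winRank G u ρ - 1) u' ρ') := by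
  have hmem : Win G (winRank G u ρ) u ρ := Nat.sInf_mem h
  cases hr : winRank G u ρ with
  | zero => rw [hr] at hmem; exact absurd hmem hne
  | succ m =>
      rw [hr] at hmem
      rcases hmem with hmem | ⟨u', ha, hb⟩
      · exact absurd hmem hne
      · refine ⟨u', ha, ?_⟩
        simpa [hr] using hb

open Classical in
noncomputable def winStrat {V : Type*} (G : RefGraph V) (u ρ : V) : V :=
  if h : u ≠ ρ ∧ ∃ k, Win G k u ρ then Classical.choose (win_step G h.2 h.1) else u

lemma winStrat_adj {V : Type*} (G : RefGraph V) (u ρ : V) : G.Adj u (winStrat G u ρ) := by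
  unfold winStrat
  by_cases h : u ≠ ρ ∧ ∃ k, Win G k u ρ
  · rw [dif_pos h]; exact (Classical.choose_spec (win_step G h.2 h.1)).1
  · rw [dif_neg h]; exact G.refl u

lemma winStrat_spec {V : Type*} (G : RefGraph V) {u ρ : V} (hne : u ≠ ρ)
    (h : ∃ k, Win G k u ρ) :
    winStrat G u ρ = ρ ∨
      ∀ ρ', G.Adj ρ ρ' → Win G (winRank G u ρ - 1) (winStrat G u ρ) ρ' := by
  unfold winStrat
  rw [dif_pos ⟨hne, h⟩]
  exact (Classical.choose_spec (win_step G h hne)).2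

lemma copSeq_shift {V : Type*} (S : V → V → V) (c0 : V) (rb : ℕ → V) :
    ∀ n, copSeq S c0 rb (n + 1) = copSeq S (S c0 (rb 0)) (fun i => rb (i + 1)) n := by
  intro n
  induction n with
  | zero => rfl
  | succ n ih => show S _ _ = S _ _; rw [ih]

lemma winStrat_catches {V : Type*} (G : RefGraph V) :
    ∀ k u (rb : ℕ → V), LegalPlay G rb → Win G k u (rb 0) →
      ∃ n, copSeq (winStrat G) u rb n = rb n ∨ copSeq (winStrat G) u rb (n + 1) = rb n := by
  intro k
  induction k using Nat.strong_induction_on with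
  | _ k ih =>
      intro u rb hleg hwin
      by_cases hne : u = rb 0
      · exact ⟨0, Or.inl hne⟩
      have hex : ∃ k', Win G k' u (rb 0) := ⟨k, hwin⟩
      have hk1 : 1 ≤ k := by
        rcases Nat.eq_zero_or_pos k with h | h
        · subst h; exact absurd hwin hne
        · exact h
      have hμk : winRank G u (rb 0) ≤ k := Nat.sInf_le hwin
      rcases winStrat_spec G hne hex with hcatch | hstep
      · refine ⟨0, Or.inr ?_⟩
        show winStrat G u (rb 0) = rb 0
        exact hcatch
      · have hwin' : Win G (winRank G u (rb 0) - 1) (winStrat G u (rb 0)) (rb 1) :=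
          hstep (rb 1) (hleg 0)
        have hlt : winRank G u (rb 0) - 1 < k := by omega
        obtain ⟨n, hn⟩ := ih _ hlt (winStrat G u (rb 0)) (fun i => rb (i + 1))
          (fun n => hleg (n + 1)) hwin'
        refine ⟨n + 1, ?_⟩
        rcases hn with hn | hn
        · exact Or.inl (by rw [copSeq_shift]; exact hn)
        · exact Or.inr (by rw [copSeq_shift]; exact hn)

lemma copWin_of_win {V : Type*} (G : RefGraph V) (c0 : V)
    (h : ∀ ρ, ∃ k, Win G k c0 ρ) : CopWin G := by
  refine ⟨c0, winStrat G, winStrat_adj G, fun rb hleg => ?_⟩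
  obtain ⟨k, hk⟩ := h (rb 0)
  exact winStrat_catches G k c0 rb hleg hk

noncomputable def escSeq {V : Type*} (S : V → V → V) (nxt : V → V → V)
    (c0 ρ0 : V) : ℕ → V × V
  | 0 => (c0, ρ0)
  | n + 1 => (S (escSeq S nxt c0 ρ0 n).1 (escSeq S nxt c0 ρ0 n).2,
      nxt (escSeq S nxt c0 ρ0 n).1 (escSeq S nxt c0 ρ0 n).2)

lemma exists_win_of_winningStrat {V : Type*} [Fintype V] (G : RefGraph V)
    {c0 : V} {S : V → V → V} (hS : WinningStrat G c0 S) :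
    ∀ ρ, ∃ k, Win G k c0 ρ := by
  intro ρ0
  by_contra h0
  push_neg at h0
  haveI : Nonempty V := ⟨c0⟩
  have key : ∀ u ρ, (∀ k, ¬ Win G k u ρ) →
      ∃ ρ', G.Adj ρ ρ' ∧ ∀ k, ¬ Win G k (S u ρ) ρ' := by
    intro u ρ hE
    by_contra hc
    push_neg at hc
    have hall : ∀ ρ', ∃ k, G.Adj ρ ρ' → Win G k (S u ρ) ρ' := by
      intro ρ'
      by_cases ha : G.Adj ρ ρ'
      · obtain ⟨k, hk⟩ := hc ρ' ha
        exact ⟨k, fun _ => hk⟩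
      · exact ⟨0, fun hh => absurd hh ha⟩
    choose f hf using hall
    have hK : ∀ ρ', G.Adj ρ ρ' → Win G (Finset.univ.sup f) (S u ρ) ρ' := fun ρ' ha =>
      win_mono G (Finset.le_sup (Finset.mem_univ ρ')) (hf ρ' ha)
    exact hE (Finset.univ.sup f + 1) (Or.inr ⟨S u ρ, hS.1 u ρ, Or.inr hK⟩)
  set nxt : V → V → V := fun u ρ =>
    Classical.epsilon (fun ρ' => G.Adj ρ ρ' ∧ ∀ k, ¬ Win G k (S u ρ) ρ') with hnxt
  set p : ℕ → V × V := escSeq S nxt c0 ρ0 with hp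
  have hp0 : p 0 = (c0, ρ0) := rfl
  have hps : ∀ n, p (n + 1) = (S (p n).1 (p n).2, nxt (p n).1 (p n).2) := fun n => rfl
  have hE : ∀ n, ∀ k, ¬ Win G k (p n).1 (p n).2 := by
    intro n
    induction n with
    | zero => rw [hp0]; exact h0
    | succ n ihn =>
        rw [hps n]
        exact (Classical.epsilon_spec (key _ _ ihn)).2
  have hleg : LegalPlay G (fun n => (p n).2) := by
    intro n
    show G.Adj (p n).2 (p (n + 1)).2
    rw [hps n]
    exact (Classical.epsilon_spec (key _ _ (hE n))).1
  have hcop : ∀ n, copSeq S c0 (fun n => (p n).2) n = (p n).1 := by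
    intro n
    induction n with
    | zero => rfl
    | succ n ihn =>
        rw [hps n]
        show S _ _ = S _ _
        rw [ihn]
  obtain ⟨n, hn⟩ := hS.2 _ hleg
  rcases hn with hn | hn
  · rw [hcop n] at hn
    exact hE n 0 hn
  · have h1 : copSeq S c0 (fun n => (p n).2) (n + 1) = S (p n).1 (p n).2 := by
      show S (copSeq S c0 (fun n => (p n).2) n) ((fun n => (p n).2) n) = _
      rw [hcop n]
    rw [h1] at hn
    exact hE n 1 (Or.inr ⟨S (p n).1 (p n).2, hS.1 _ _, Or.inl hn⟩)


theorem copWin_delete_dominated {V : Type*} [Fintype V] (G : RefGraph V)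
    (hG : CopWin G) (c r : V) (hne : c ≠ r) (hadj : G.Adj c r)
    (hdom : ∀ η, G.Adj r η → G.Adj c η) :
    CopWin (G.induce {v | v ≠ r}) := by
  classical
  obtain ⟨c0, S, hS⟩ := hG
  have hwin := exists_win_of_winningStrat G hS
  set π : V → V := fun u => if u = r then c else u with hπ
  have hπne : ∀ u, π u ≠ r := by
    intro u
    simp only [hπ]
    split
    · exact hne
    · assumption
  have hπeq : ∀ u, u ≠ r → π u = u := by
    intro u hu
    simp only [hπ]
    rw [if_neg hu]
  have hhom : ∀ u v, G.Adj u v → G.Adj (π u) (π v) := by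
    intro u v huv
    simp only [hπ]
    split <;> split
    · next h1 h2 => exact G.refl c
    · next h1 h2 => subst h1; exact hdom v huv
    · next h1 h2 => subst h2; exact G.symm _ _ (hdom u (G.symm _ _ huv))
    · exact huv
  have hret : ∀ k u (ρ : V) (hρ : ρ ≠ r), Win G k u ρ →
      Win (G.induce {v | v ≠ r}) k ⟨π u, hπne u⟩ ⟨ρ, hρ⟩ := by
    intro k
    induction k with
    | zero =>
        intro u ρ hρ h
        apply Subtype.ext
        show π u = ρ
        subst h
        exact hπeq u hρ
    | succ k ihk =>
        intro u ρ hρ h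
        rcases h with h | ⟨u', ha, hb⟩
        · left
          apply Subtype.ext
          show π u = ρ
          subst h
          exact hπeq u hρ
        · right
          refine ⟨⟨π u', hπne u'⟩, hhom _ _ ha, ?_⟩
          rcases hb with hb | hb
          · left
            apply Subtype.ext
            show π u' = ρ
            subst hb
            exact hπeq u' hρ
          · right
            rintro ⟨ρ', hρ'⟩ hadj'
            exact ihk u' ρ' hρ' (hb ρ' hadj')
  apply copWin_of_win _ (⟨π c0, hπne c0⟩ : {v | v ≠ r})
  rintro ⟨ρ, hρ⟩
  obtain ⟨k, hk⟩ := hwin ρ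
  exact ⟨k, hret k c0 ρ hρ hk⟩
end

section
/- Every constructible graph is weakly cop-win. Explicitly, the strategy s*(c,r) = δ^{k(c,r)}(r), where k(c,r) = min{k : c is adjacent to δ^k(r)}, is a weakly winning strategy for the cop starting at the least vertex 0; moreover under this strategy each vertex r can be robbed at most finitely many times. -/
/-- `(c0, S)` is a weakly winning strategy for the cop on `G`: all moves are legal and
against every legal robber play, either the robber is caught, or the robber visits
no vertex infinitely often. -/
def WeaklyWinningStrat {V : Type*} (G : RefGraph V) (c0 : V) (S : V → V → V) : Prop :=
  (∀ c r, G.Adj c (S c r)) ∧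
  ∀ rb : ℕ → V, LegalPlay G rb →
    Catches S c0 rb ∨ ∀ v : V, {n | rb n = v}.Finite

/-- `G` is weakly cop-win: the cop has a weakly winning strategy. -/
def WeaklyCopWin {V : Type*} (G : RefGraph V) : Prop :=
  ∃ (c0 : V) (S : V → V → V), WeaklyWinningStrat G c0 S

set_option linter.unusedSectionVars false

section helpers

variable {V : Type*} [LinearOrder V] [OrderBot V] [WellFoundedLT V]
variable {G : RefGraph V} {δ : V → V}

private lemma dm_delta_le (hδ : IsDomMap G δ) (v : V) : δ v ≤ v := by
  rcases eq_or_ne v ⊥ with h | h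
  · rw [h, hδ.1]
  · exact (hδ.2 v h).1.le

private lemma dm_iter_le (hδ : IsDomMap G δ) (v : V) (j : ℕ) : δ^[j] v ≤ v := by
  induction j with
  | zero => simp
  | succ n ih =>
    rw [Function.iterate_succ_apply']
    exact (dm_delta_le hδ _).trans ih

private lemma dm_iter_anti (hδ : IsDomMap G δ) (v : V) {i j : ℕ} (h : i ≤ j) :
    δ^[j] v ≤ δ^[i] v := by
  obtain ⟨s, rfl⟩ := Nat.exists_eq_add_of_le h
  rw [add_comm, Function.iterate_add_apply]
  exact dm_iter_le hδ _ s

private lemma dm_reach_bot (hδ : IsDomMap G δ) (v : V) : ∃ k, δ^[k] v = ⊥ := by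
  induction v using WellFoundedLT.induction with
  | _ v ih =>
    rcases eq_or_ne v ⊥ with h | h
    · exact ⟨0, h⟩
    · obtain ⟨k, hk⟩ := ih (δ v) (hδ.2 v h).1
      exact ⟨k + 1, by rwa [Function.iterate_succ_apply]⟩

private lemma dm_retract (hδ : IsDomMap G δ) :
    ∀ (N p q : ℕ) (x y ν : V), p + q ≤ N → G.Adj x y →
      δ^[p] x < ν → (∀ i < p, ¬ δ^[i] x < ν) →
      δ^[q] y < ν → (∀ i < q, ¬ δ^[i] y < ν) →
      δ^[p] x = δ^[q] y ∨ G.Adj (δ^[p] x) (δ^[q] y) := by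
  intro N
  induction N with
  | zero =>
    intro p q x y ν hN hxy hx _ hy _
    obtain ⟨hp, hq⟩ : p = 0 ∧ q = 0 := by omega
    subst hp; subst hq
    right; simpa using hxy
  | succ N ih =>
    intro p q x y ν hN hxy hx hxmin hy hymin
    have reducep : 0 < p → y ≤ x →
        δ^[p] x = δ^[q] y ∨ G.Adj (δ^[p] x) (δ^[q] y) := by
      intro hp hylex
      have hνx : ν ≤ x := by simpa using not_lt.mp (hxmin 0 hp)
      have hxb : x ≠ ⊥ := ((bot_le.trans_lt hx).trans_le hνx).ne'
      have hAdj : G.Adj (δ x) y := (hδ.2 x hxb).2.2 y hylex hxy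
      have e : δ^[p-1] (δ x) = δ^[p] x := by
        conv_rhs => rw [← Nat.succ_pred_eq_of_pos hp]
        rw [Function.iterate_succ_apply]
        rfl
      have h2 := ih (p-1) q (δ x) y ν (by omega) hAdj
        (by rw [e]; exact hx)
        (fun i hi => by
          rw [show δ^[i] (δ x) = δ^[i+1] x from (Function.iterate_succ_apply δ i x).symm]
          exact hxmin (i+1) (by omega))
        hy hymin
      rwa [e] at h2
    have reduceq : 0 < q → x ≤ y →
        δ^[p] x = δ^[q] y ∨ G.Adj (δ^[p] x) (δ^[q] y) := by
      intro hq hxley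
      have hνy : ν ≤ y := by simpa using not_lt.mp (hymin 0 hq)
      have hyb : y ≠ ⊥ := ((bot_le.trans_lt hy).trans_le hνy).ne'
      have hAdj : G.Adj (δ y) x := (hδ.2 y hyb).2.2 x hxley (G.symm x y hxy)
      have e : δ^[q-1] (δ y) = δ^[q] y := by
        conv_rhs => rw [← Nat.succ_pred_eq_of_pos hq]
        rw [Function.iterate_succ_apply]
        rfl
      have h2 := ih p (q-1) x (δ y) ν (by omega) (G.symm _ _ hAdj)
        hx hxmin
        (by rw [e]; exact hy)
        (fun i hi => by
          rw [show δ^[i] (δ y) = δ^[i+1] y from (Function.iterate_succ_apply δ i y).symm]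
          exact hymin (i+1) (by omega))
      rwa [e] at h2
    rcases Nat.eq_zero_or_pos p with hp | hp
    · rcases Nat.eq_zero_or_pos q with hq | hq
      · subst hp; subst hq; right; simpa using hxy
      · refine reduceq hq ?_
        have hνy : ν ≤ y := by simpa using not_lt.mp (hymin 0 hq)
        have hxν : x < ν := by simpa [hp] using hx
        exact hxν.le.trans hνy
    · rcases Nat.eq_zero_or_pos q with hq | hq
      · refine reducep hp ?_
        have hνx : ν ≤ x := by simpa using not_lt.mp (hxmin 0 hp)
        have hyν : y < ν := by simpa [hq] using hy
        exact hyν.le.trans hνx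
      · rcases le_total y x with h | h
        · exact reducep hp h
        · exact reduceq hq h

end helpers

/-- every constructible graph is weakly cop-win. Explicitly, there is a
strategy `S` which agrees with `s*(c,r) = δ^[k(c,r)] r` — where `k(c,r)` is minimal
with `c` adjacent to `δ^[k] r` — on every configuration where such a `k` exists, and
which, started from the least vertex `⊥`, catches every legal robber play or forces
the robber to visit each vertex only finitely many times (in particular each vertex
can be robbed at most finitely many times). -/
theorem constructible_weaklyCopWin {V : Type*} [LinearOrder V] [OrderBot V]
    [WellFoundedLT V] (G : RefGraph V) (δ : V → V) (hδ : IsDomMap G δ) :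
    ∃ S : V → V → V,
      (∀ c r, G.Adj c (S c r)) ∧
      (∀ c r (k : ℕ), G.Adj c (δ^[k] r) → (∀ j < k, ¬ G.Adj c (δ^[j] r)) →
        S c r = δ^[k] r) ∧
      ∀ rb : ℕ → V, LegalPlay G rb →
        Catches S ⊥ rb ∨ ∀ v : V, {n | rb n = v}.Finite := by
  classical
  obtain ⟨S, hSdef⟩ : ∃ S : V → V → V, ∀ c r, S c r =
      if h : ∃ k, G.Adj c (δ^[k] r) then δ^[sInf {k | G.Adj c (δ^[k] r)}] r else c :=
    ⟨_, fun _ _ => rfl⟩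
  have hS1 : ∀ c r, G.Adj c (S c r) := by
    intro c r
    by_cases h : ∃ k, G.Adj c (δ^[k] r)
    · rw [hSdef, dif_pos h]
      exact Nat.sInf_mem h
    · rw [hSdef, dif_neg h]
      exact G.refl c
  have hS2 : ∀ c r (k : ℕ), G.Adj c (δ^[k] r) → (∀ j < k, ¬ G.Adj c (δ^[j] r)) →
      S c r = δ^[k] r := by
    intro c r k hk hmin
    have hex : ∃ k, G.Adj c (δ^[k] r) := ⟨k, hk⟩
    have hinf : sInf {k | G.Adj c (δ^[k] r)} = k := by
      refine le_antisymm (Nat.sInf_le hk) ?_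
      by_contra hlt
      push_neg at hlt
      exact hmin _ hlt (Nat.sInf_mem hex)
    rw [hSdef, dif_pos hex, hinf]
  refine ⟨S, hS1, hS2, ?_⟩
  intro rb hleg
  by_contra hcon
  push_neg at hcon
  obtain ⟨hnc, v, hv⟩ := hcon
  simp only [Catches, not_exists, not_or] at hnc
  set c : ℕ → V := copSeq S ⊥ rb with hcdef
  set K : ℕ → ℕ := fun n => sInf {k | G.Adj (c n) (δ^[k] (rb n))} with hKdef
  set nu : ℕ → V := fun n => δ^[K n - 1] (rb n) with hnudef
  have csucc : ∀ n, c (n + 1) = S (c n) (rb n) := fun n => rfl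
  -- basic facts at any step where the defining set is nonempty
  have facts : ∀ n, {k | G.Adj (c n) (δ^[k] (rb n))}.Nonempty →
      c (n+1) = δ^[K n] (rb n) ∧ K n ≠ 0 ∧ nu n ≠ ⊥ ∧
      δ^[K n] (rb n) < nu n ∧ (∀ i < K n, ¬ δ^[i] (rb n) < nu n) := by
    intro n hne
    have hk : G.Adj (c n) (δ^[K n] (rb n)) := Nat.sInf_mem hne
    have hkmin : ∀ j < K n, ¬ G.Adj (c n) (δ^[j] (rb n)) :=
      fun j hj => Nat.notMem_of_lt_sInf hj
    have hc1 : c (n+1) = δ^[K n] (rb n) := by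
      rw [csucc n]; exact hS2 _ _ _ hk hkmin
    have hK0 : K n ≠ 0 := by
      intro h0
      apply (hnc n).2
      rw [hc1, h0]
      simp
    have epred : δ^[K n] (rb n) = δ (δ^[K n - 1] (rb n)) := by
      conv_lhs => rw [← Nat.succ_pred_eq_of_pos (Nat.pos_of_ne_zero hK0),
        Function.iterate_succ_apply']
      rfl
    have hnub : nu n ≠ ⊥ := by
      intro hb
      have hb' : δ^[K n - 1] (rb n) = ⊥ := hb
      have h1 : δ^[K n] (rb n) = ⊥ := by rw [epred, hb', hδ.1]
      exact hkmin (K n - 1) (by omega) (by rw [hb', ← h1]; exact hk)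
    have hlt : δ^[K n] (rb n) < nu n := by
      rw [epred]
      exact (hδ.2 _ hnub).1
    refine ⟨hc1, hK0, hnub, hlt, ?_⟩
    intro i hi
    exact not_lt.mpr (dm_iter_anti hδ (rb n) (show i ≤ K n - 1 by omega))
  have qstep : ∀ n, {k | G.Adj (c n) (δ^[k] (rb n))}.Nonempty →
      ∃ q, G.Adj (c (n+1)) (δ^[q] (rb (n+1))) ∧ ∀ i < q, nu n ≤ δ^[i] (rb (n+1)) := by
    intro n hne
    obtain ⟨hc1, hK0, hnub, hlt, hge⟩ := facts n hne
    have hqne : {j | δ^[j] (rb (n+1)) < nu n}.Nonempty := by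
      obtain ⟨k, hk⟩ := dm_reach_bot hδ (rb (n+1))
      refine ⟨k, ?_⟩
      show δ^[k] (rb (n+1)) < nu n
      rw [hk]
      exact bot_lt_iff_ne_bot.mpr hnub
    have hq : δ^[sInf {j | δ^[j] (rb (n+1)) < nu n}] (rb (n+1)) < nu n := Nat.sInf_mem hqne
    have hqmin : ∀ i < sInf {j | δ^[j] (rb (n+1)) < nu n}, ¬ δ^[i] (rb (n+1)) < nu n :=
      fun i hi => Nat.notMem_of_lt_sInf hi
    have hret := dm_retract hδ (K n + sInf {j | δ^[j] (rb (n+1)) < nu n})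
      (K n) (sInf {j | δ^[j] (rb (n+1)) < nu n}) (rb n) (rb (n+1)) (nu n)
      le_rfl (hleg n) hlt hge hq hqmin
    refine ⟨sInf {j | δ^[j] (rb (n+1)) < nu n}, ?_, fun i hi => not_lt.mp (hqmin i hi)⟩
    rw [hc1]
    rcases hret with h | h
    · rw [h]; exact G.refl _
    · exact h
  have inv : ∀ n, {k | G.Adj (c n) (δ^[k] (rb n))}.Nonempty := by
    intro n
    induction n with
    | zero =>
      obtain ⟨k, hk⟩ := dm_reach_bot hδ (rb 0)
      refine ⟨k, ?_⟩
      show G.Adj (c 0) (δ^[k] (rb 0))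
      have hc0 : c 0 = ⊥ := rfl
      rw [hc0, hk]
      exact G.refl ⊥
    | succ n ih =>
      obtain ⟨q, hq, _⟩ := qstep n ih
      exact ⟨q, hq⟩
  have mono : Monotone nu := by
    refine monotone_nat_of_le_succ fun n => ?_
    obtain ⟨q, hq, hqmin⟩ := qstep n (inv n)
    obtain ⟨_, hK0', _, _, _⟩ := facts (n+1) (inv (n+1))
    have hKq : K (n+1) ≤ q := Nat.sInf_le hq
    exact hqmin _ (by omega)
  -- endgame
  have endg : ∀ m n, m < n → nu m = nu n → False := by
    intro m n hmn hnueq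
    obtain ⟨_, hK0, hnub, _, _⟩ := facts n (inv n)
    have h1 : nu m ≤ nu (n-1) := mono (by omega)
    have h2 : nu (n-1) ≤ nu n := mono (by omega)
    have hmid : nu (n-1) = nu n := le_antisymm h2 (hnueq ▸ h1)
    obtain ⟨hc1', hK0', _, _, _⟩ := facts (n-1) (inv (n-1))
    have hcn : c n = δ (nu n) := by
      have e : n - 1 + 1 = n := by omega
      rw [e] at hc1'
      rw [hc1', ← hmid]
      conv_lhs => rw [← Nat.succ_pred_eq_of_pos (Nat.pos_of_ne_zero hK0'),
        Function.iterate_succ_apply']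
      rfl
    have hadj : G.Adj (c n) (δ^[K n - 1] (rb n)) := by
      rw [hcn]
      exact (hδ.2 (nu n) hnub).2.1
    exact Nat.notMem_of_lt_sInf (show K n - 1 < K n by omega) hadj
  obtain ⟨Kv, hKv⟩ := dm_reach_bot hδ v
  have hmaps : Set.MapsTo nu {n | rb n = v} ((fun j => δ^[j] v) '' Set.Iic Kv) := by
    intro n hn
    have hn' : rb n = v := hn
    obtain ⟨_, hK0, hnub, _, _⟩ := facts n (inv n)
    refine ⟨K n - 1, ?_, ?_⟩
    · show K n - 1 ≤ Kv
      by_contra hgt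
      push_neg at hgt
      apply hnub
      show δ^[K n - 1] (rb n) = ⊥
      rw [hn']
      have hle : δ^[K n - 1] v ≤ δ^[Kv] v := dm_iter_anti hδ _ hgt.le
      rw [hKv] at hle
      exact le_bot_iff.mp hle
    · show δ^[K n - 1] v = nu n
      rw [← hn']
  have hfin : ((fun j => δ^[j] v) '' Set.Iic Kv).Finite := (Set.finite_Iic Kv).image _
  obtain ⟨n₁, hn₁, n₂, hn₂, hne, hnueq⟩ :=
    Set.Infinite.exists_ne_map_eq_of_mapsTo hv hmaps hfin
  rcases hne.lt_or_gt with h | h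
  · exact endg n₁ n₂ h hnueq
  · exact endg n₂ n₁ h hnueq.symm
end

section
/- In the strategy s* on a constructible graph, after every cop move the cop's position equals ρ_ν(r) for some ordinal ν (r the robber's position), and this ν is non-decreasing over the course of the play. -/
set_option linter.unusedSectionVars false


namespace CopAux

variable {V : Type*} [LinearOrder V] [OrderBot V] [WellFoundedLT V]
variable {G : RefGraph V} {δ : V → V}

noncomputable def rk (δ : V → V) (ν : WithTop V) (v : V) : ℕ :=
  sInf {k | (δ^[k] v : WithTop V) < ν}

noncomputable def rho (δ : V → V) (ν : WithTop V) (v : V) : V :=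
  δ^[rk δ ν v] v

lemma delta_le (hδ : IsDomMap G δ) (v : V) : δ v ≤ v := by
  rcases eq_or_ne v ⊥ with h | h
  · rw [h, hδ.1]
  · exact ((hδ.2 v h).1).le

lemma iter_le (hδ : IsDomMap G δ) (v : V) (n : ℕ) : δ^[n] v ≤ v := by
  induction n with
  | zero => simp
  | succ n ih =>
    rw [Function.iterate_succ_apply']
    exact le_trans (delta_le hδ _) ih

lemma iter_anti (hδ : IsDomMap G δ) (v : V) {j k : ℕ} (h : j ≤ k) :
    δ^[k] v ≤ δ^[j] v := by
  obtain ⟨m, rfl⟩ := Nat.exists_eq_add_of_le h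
  rw [Nat.add_comm, Function.iterate_add_apply]
  exact iter_le hδ _ _

lemma iter_bot (hδ : IsDomMap G δ) (v : V) : ∃ k, δ^[k] v = ⊥ := by
  induction v using WellFoundedLT.induction with
  | _ v IH =>
    rcases eq_or_ne v ⊥ with h | h
    · exact ⟨0, h⟩
    · obtain ⟨k, hk⟩ := IH (δ v) (hδ.2 v h).1
      exact ⟨k + 1, by rw [Function.iterate_succ_apply]; exact hk⟩

lemma rkSet_ne (hδ : IsDomMap G δ) {ν : WithTop V} (hν : ((⊥ : V) : WithTop V) < ν)
    (v : V) : {k | (δ^[k] v : WithTop V) < ν}.Nonempty := by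
  obtain ⟨k, hk⟩ := iter_bot hδ v
  exact ⟨k, by simp only [Set.mem_setOf_eq, hk]; exact hν⟩

lemma rho_lt (hδ : IsDomMap G δ) {ν : WithTop V} (hν : ((⊥ : V) : WithTop V) < ν)
    (v : V) : ((rho δ ν v : V) : WithTop V) < ν :=
  Nat.sInf_mem (rkSet_ne hδ hν v)

lemma rk_min {ν : WithTop V} {v : V} {j : ℕ} (h : j < rk δ ν v) :
    ¬ ((δ^[j] v : WithTop V) < ν) :=
  Nat.notMem_of_lt_sInf h

lemma rho_of_lt {ν : WithTop V} {v : V} (h : (v : WithTop V) < ν) :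
    rho δ ν v = v := by
  have h0 : rk δ ν v = 0 := Nat.le_zero.mp (Nat.sInf_le (by simpa using h))
  rw [rho, h0]; rfl

lemma rho_shift (hδ : IsDomMap G δ) {ν : WithTop V} (hν : ((⊥ : V) : WithTop V) < ν)
    {v : V} (h : ¬ ((v : WithTop V) < ν)) :
    rho δ ν v = rho δ ν (δ v) := by
  have hne : v ≠ ⊥ := by rintro rfl; exact h hν
  set s : Set ℕ := {k | (δ^[k] v : WithTop V) < ν} with hs
  set s' : Set ℕ := {k | (δ^[k] (δ v) : WithTop V) < ν} with hs'
  have hmem : ∀ k, k + 1 ∈ s ↔ k ∈ s' := by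
    intro k
    simp only [hs, hs', Set.mem_setOf_eq, Function.iterate_succ_apply]
  have h0 : (0 : ℕ) ∉ s := by simpa [hs] using h
  have hkey : rk δ ν v = rk δ ν (δ v) + 1 := by
    apply le_antisymm
    · exact Nat.sInf_le ((hmem _).mpr (Nat.sInf_mem (rkSet_ne hδ hν (δ v))))
    · have hm : rk δ ν v ∈ s := Nat.sInf_mem (rkSet_ne hδ hν v)
      have hz : rk δ ν v ≠ 0 := by rintro hz; rw [hz] at hm; exact h0 hm
      obtain ⟨m, hm'⟩ := Nat.exists_eq_succ_of_ne_zero hz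
      rw [hm'] at hm ⊢
      exact Nat.succ_le_succ (Nat.sInf_le ((hmem m).mp hm))
  rw [rho, rho, hkey, Function.iterate_succ_apply]

lemma retract_adj (hδ : IsDomMap G δ) {ν : WithTop V} (hν : ((⊥ : V) : WithTop V) < ν)
    {μ μ' : V} (hadj : G.Adj μ μ') : G.Adj (rho δ ν μ) (rho δ ν μ') := by
  suffices H : ∀ m : V, ∀ μ μ' : V, μ ⊔ μ' ≤ m → G.Adj μ μ' →
      G.Adj (rho δ ν μ) (rho δ ν μ') from H (μ ⊔ μ') μ μ' le_rfl hadj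
  intro m
  induction m using WellFoundedLT.induction with
  | _ m IH =>
    intro μ μ' hsup hadj
    rcases lt_trichotomy μ μ' with hlt | heq | hgt
    · by_cases hν' : (μ' : WithTop V) < ν
      · rw [rho_of_lt hν', rho_of_lt (lt_trans (by exact_mod_cast hlt) hν')]
        exact hadj
      · have hne : μ' ≠ ⊥ := by rintro rfl; exact hν' hν
        have hd := hδ.2 μ' hne
        have hadj' : G.Adj μ (δ μ') :=
          G.symm _ _ (hd.2.2 μ hlt.le (G.symm _ _ hadj))
        have hlt2 : μ ⊔ δ μ' < m :=
          lt_of_lt_of_le (sup_lt_iff.mpr ⟨hlt, hd.1⟩) (le_trans le_sup_right hsup)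
        rw [rho_shift hδ hν hν']
        exact IH _ hlt2 _ _ le_rfl hadj'
    · rw [heq]; exact G.refl _
    · by_cases hν' : (μ : WithTop V) < ν
      · rw [rho_of_lt hν', rho_of_lt (lt_trans (by exact_mod_cast hgt) hν')]
        exact hadj
      · have hne : μ ≠ ⊥ := by rintro rfl; exact hν' hν
        have hd := hδ.2 μ hne
        have hadj' : G.Adj (δ μ) μ' := hd.2.2 μ' hgt.le hadj
        have hlt2 : δ μ ⊔ μ' < m :=
          lt_of_lt_of_le (sup_lt_iff.mpr ⟨hd.1, hgt⟩) (le_trans le_sup_left hsup)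
        rw [rho_shift hδ hν hν']
        exact IH _ hlt2 _ _ le_rfl hadj'

lemma move (hδ : IsDomMap G δ) (S : V → V → V)
    (hspec : ∀ c r (k : ℕ), G.Adj c (δ^[k] r) → (∀ j < k, ¬ G.Adj c (δ^[j] r)) →
      S c r = δ^[k] r)
    (c r : V) (hne : ∃ m, G.Adj c (δ^[m] r)) :
    ∃ ν' : WithTop V, ((⊥ : V) : WithTop V) < ν' ∧ S c r = rho δ ν' r ∧
      ∀ ν : WithTop V, ((⊥ : V) : WithTop V) < ν → G.Adj c (rho δ ν r) → ν ≤ ν' := by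
  set T : Set ℕ := {m | G.Adj c (δ^[m] r)} with hT
  have hmem : sInf T ∈ T := Nat.sInf_mem hne
  have hmin : ∀ j < sInf T, ¬ G.Adj c (δ^[j] r) := fun j hj => Nat.notMem_of_lt_sInf hj
  have hS : S c r = δ^[sInf T] r := hspec c r _ hmem hmin
  rcases Nat.eq_zero_or_eq_succ_pred (sInf T) with h0 | hsucc
  · refine ⟨⊤, WithTop.coe_lt_top _, ?_, fun ν _ _ => le_top⟩
    rw [hS, h0, rho_of_lt (WithTop.coe_lt_top r)]
    rfl
  · set m := (sInf T).pred with hm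
    have hIT : sInf T = m + 1 := hsucc
    have hbne : δ^[m] r ≠ ⊥ := by
      intro hb
      apply hmin m (by omega)
      have heq : δ^[m + 1] r = ⊥ := by
        rw [Function.iterate_succ_apply', hb, hδ.1]
      rw [hIT] at hmem
      have hmem' : G.Adj c (δ^[m + 1] r) := hmem
      rw [heq] at hmem'
      rw [hb]
      exact hmem'
    refine ⟨((δ^[m] r : V) : WithTop V), ?_, ?_, ?_⟩
    · exact_mod_cast bot_lt_iff_ne_bot.mpr hbne
    · have hrk : rk δ ((δ^[m] r : V) : WithTop V) r = m + 1 := by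
        have hin : m + 1 ∈ {k | (δ^[k] r : WithTop V) < ((δ^[m] r : V) : WithTop V)} := by
          have : δ^[m + 1] r < δ^[m] r := by
            rw [Function.iterate_succ_apply']
            exact (hδ.2 _ hbne).1
          exact_mod_cast this
        have h1 : rk δ _ r ≤ m + 1 := Nat.sInf_le hin
        rcases lt_or_eq_of_le h1 with h2 | h2
        · exfalso
          have h3 : rk δ ((δ^[m] r : V) : WithTop V) r ∈
              {k | (δ^[k] r : WithTop V) < ((δ^[m] r : V) : WithTop V)} :=
            Nat.sInf_mem ⟨m + 1, hin⟩
          have h4 : (δ^[rk δ ((δ^[m] r : V) : WithTop V) r] r : V) < δ^[m] r := by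
            exact_mod_cast h3
          exact absurd (iter_anti hδ r (Nat.lt_succ_iff.mp h2)) (not_le.mpr h4)
        · exact h2
      rw [rho, hrk, hS, hIT]
    · intro ν hν hadj
      by_contra hle
      push_neg at hle
      have hmS : m ∈ {k | (δ^[k] r : WithTop V) < ν} := hle
      have h5 : rk δ ν r ≤ m := Nat.sInf_le hmS
      have h6 : sInf T ≤ rk δ ν r := Nat.sInf_le hadj
      omega

end CopAux

/-- playing the strategy `s*` (any strategy `S` agreeing with
`s*(c,r) = δ^[k(c,r)] r`, `k(c,r)` minimal with `c` adjacent to `δ^[k] r`) from the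
least vertex `⊥` on a constructible graph, after every cop move the cop's position
equals `ρ_ν(r)` for some (extended) index `ν` — i.e. it is `δ^[k] r` for the minimal
`k` with `δ^[k] r < ν`, where `r` is the robber's current position — and this index
`ν` can be chosen non-decreasing over the course of the play. -/
theorem copPos_is_retract_image_monotone {V : Type*} [LinearOrder V] [OrderBot V]
    [WellFoundedLT V] (G : RefGraph V) (δ : V → V) (hδ : IsDomMap G δ)
    (S : V → V → V) (hleg : ∀ c r, G.Adj c (S c r))
    (hspec : ∀ c r (k : ℕ), G.Adj c (δ^[k] r) → (∀ j < k, ¬ G.Adj c (δ^[j] r)) →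
      S c r = δ^[k] r) :
    ∀ rb : ℕ → V, LegalPlay G rb →
      ∃ ν : ℕ → WithTop V, Monotone ν ∧
        ∀ n, ∃ k : ℕ,
          copSeq S ⊥ rb (n + 1) = δ^[k] (rb n) ∧
          (δ^[k] (rb n) : WithTop V) < ν n ∧
          ∀ j < k, ¬ ((δ^[j] (rb n) : WithTop V) < ν n) := by
  intro rb hlp
  classical
  have key : ∀ n : ℕ, ∃ ν : WithTop V, ((⊥ : V) : WithTop V) < ν ∧
      copSeq S ⊥ rb (n + 1) = CopAux.rho δ ν (rb n) ∧
      ∀ ν₀ : WithTop V, ((⊥ : V) : WithTop V) < ν₀ →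
        G.Adj (copSeq S ⊥ rb n) (CopAux.rho δ ν₀ (rb n)) → ν₀ ≤ ν := by
    intro n
    induction n with
    | zero =>
      obtain ⟨k, hk⟩ := CopAux.iter_bot hδ (rb 0)
      have hne : ∃ m, G.Adj (copSeq S ⊥ rb 0) (δ^[m] (rb 0)) :=
        ⟨k, by show G.Adj (⊥ : V) _; rw [hk]; exact G.refl ⊥⟩
      obtain ⟨ν, h1, h2, h3⟩ := CopAux.move hδ S hspec _ _ hne
      exact ⟨ν, h1, h2, h3⟩
    | succ n IH =>
      obtain ⟨ν, h1, h2, h3⟩ := IH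
      have hne : ∃ m, G.Adj (copSeq S ⊥ rb (n + 1)) (δ^[m] (rb (n + 1))) := by
        refine ⟨CopAux.rk δ ν (rb (n + 1)), ?_⟩
        rw [h2]
        exact CopAux.retract_adj hδ h1 (hlp n)
      obtain ⟨ν', g1, g2, g3⟩ := CopAux.move hδ S hspec _ _ hne
      exact ⟨ν', g1, g2, g3⟩
  choose f hf using key
  refine ⟨f, monotone_nat_of_le_succ fun n => ?_, fun n => ?_⟩
  · refine (hf (n + 1)).2.2 (f n) (hf n).1 ?_
    rw [(hf n).2.1]
    exact CopAux.retract_adj hδ (hf n).1 (hlp n)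
  · exact ⟨CopAux.rk δ (f n) (rb n), (hf n).2.1,
      CopAux.rho_lt hδ (hf n).1 (rb n), fun j hj => CopAux.rk_min hj⟩
end

section
/- Let G be a dismantable graph with a natural dismantling order < and domination map δ (each vertex ν is dominated by δ(ν) > ν in G_{≥ν}). Define ρ_ν(μ) = δ^{k(ν,μ)}(μ) with k(ν,μ) = min{k : δ^k(μ) ≥ ν}. Then ρ_ν is a retraction of G onto G_{≥ν}, and whenever μ and η are adjacent, ρ_{ν+1}(μ) and ρ_ν(η) are adjacent. -/
/-- `δ` is a domination map associated to a dismantling order on `V`: every vertex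
`ν` is dominated in `G_{≥ν}` by `δ ν > ν` (adjacent to `ν` and to every neighbour
of `ν` among the vertices `≥ ν`). -/
def IsDismMap {V : Type*} [LinearOrder V] (G : RefGraph V) (δ : V → V) : Prop :=
  ∀ ν, ν < δ ν ∧ G.Adj (δ ν) ν ∧ ∀ η, ν ≤ η → G.Adj ν η → G.Adj (δ ν) η

/-- let `G` be dismantable with a natural dismantling order (witnessed
by a strictly monotone map `e : V → ℕ`) and domination map `δ`, and let
`ρ ν μ = δ^[k(ν,μ)] μ` where `k(ν,μ)` is minimal with `δ^[k] μ ≥ ν`. Then the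
iteration counts `k(ν,μ)` are finite (so `ρ` is well defined), each `ρ ν` is a
retraction of `G` onto the subgraph `G_{≥ν}` induced by the vertices `≥ ν`, and
whenever `μ` and `η` are adjacent, `ρ_{ν+1} μ` and `ρ_ν η` are adjacent
(`ν'` being the successor of `ν` in the order). -/
theorem dismantable_rho_retraction {V : Type*} [LinearOrder V]
    (G : RefGraph V) (δ : V → V) (hδ : IsDismMap G δ)
    (e : V → ℕ) (he : StrictMono e)
    (ρ : V → V → V)
    (hρ : ∀ ν μ, ∃ k : ℕ, ρ ν μ = δ^[k] μ ∧ ν ≤ δ^[k] μ ∧ ∀ j < k, ¬ ν ≤ δ^[j] μ) :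
    (∀ ν μ, ∃ k : ℕ, ν ≤ δ^[k] μ) ∧
    (∀ ν μ, ν ≤ ρ ν μ) ∧
    (∀ ν μ, ν ≤ μ → ρ ν μ = μ) ∧
    (∀ ν μ η, G.Adj μ η → G.Adj (ρ ν μ) (ρ ν η)) ∧
    (∀ ν ν', (ν < ν' ∧ ∀ x, ν < x → ν' ≤ x) →
      ∀ μ η, G.Adj μ η → G.Adj (ρ ν' μ) (ρ ν η)) := by
  classical
  -- choose the iteration counts
  obtain ⟨kf, hK1, hK2, hK3⟩ : ∃ kf : V → V → ℕ, (∀ ν μ, ρ ν μ = δ^[kf ν μ] μ) ∧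
      (∀ ν μ, ν ≤ δ^[kf ν μ] μ) ∧ (∀ ν μ, ∀ j < kf ν μ, ¬ ν ≤ δ^[j] μ) := by
    choose kf h1 h2 h3 using hρ
    exact ⟨kf, h1, h2, h3⟩
  -- fixing property
  have hfix : ∀ ν μ, ν ≤ μ → ρ ν μ = μ := by
    intro ν μ h
    obtain ⟨k, hk1, hk2, hk3⟩ := hρ ν μ
    rcases Nat.eq_zero_or_pos k with h0 | h0
    · rw [hk1, h0]; simp
    · exact absurd h (by simpa using hk3 0 h0)
  -- k ≥ ν always
  have hge : ∀ ν μ, ν ≤ ρ ν μ := by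
    intro ν μ
    rw [hK1]; exact hK2 ν μ
  -- uniqueness : kf ν (δ μ) = kf ν μ - 1 when ¬ ν ≤ μ
  have hkshift : ∀ ν μ, ¬ ν ≤ μ → kf ν μ ≠ 0 ∧ kf ν (δ μ) = kf ν μ - 1 := by
    intro ν μ h
    have hk2 := hK2 ν μ
    have hk3 := hK3 ν μ
    have hl2 := hK2 ν (δ μ)
    have hl3 := hK3 ν (δ μ)
    set k := kf ν μ with hkd
    set l := kf ν (δ μ) with hld
    have hiter : ∀ j, δ^[j] (δ μ) = δ^[j+1] μ := by
      intro j; rw [Function.iterate_succ_apply]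
    have hk0 : k ≠ 0 := by
      rintro h0
      rw [h0] at hk2; simp at hk2; exact h hk2
    refine ⟨hk0, ?_⟩
    by_contra hne
    rcases Nat.lt_or_ge l (k - 1) with hlt | hgt
    · exact hk3 (l + 1) (by omega) (by rw [← hiter]; exact hl2)
    · have hlt2 : k - 1 < l := by omega
      refine hl3 (k - 1) hlt2 ?_
      rw [hiter]
      have : k - 1 + 1 = k := by omega
      rw [this]; exact hk2
  have hkdec : ∀ ν μ, ¬ ν ≤ μ → kf ν (δ μ) < kf ν μ := by
    intro ν μ h
    obtain ⟨h0, hsh⟩ := hkshift ν μ h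
    omega
  -- shift property
  have hshift : ∀ ν μ, ¬ ν ≤ μ → ρ ν μ = ρ ν (δ μ) := by
    intro ν μ h
    obtain ⟨h0, hsh⟩ := hkshift ν μ h
    rw [hK1 ν μ, hK1 ν (δ μ), hsh]
    rw [show δ^[kf ν μ - 1] (δ μ) = δ^[kf ν μ - 1 + 1] μ from
      (Function.iterate_succ_apply δ _ μ).symm]
    congr 1; omega
  -- main adjacency lemma, by strong induction on the sum of counts
  have hadj : ∀ n ν μ η, kf ν μ + kf ν η ≤ n → G.Adj μ η → G.Adj (ρ ν μ) (ρ ν η) := by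
    intro n
    induction n with
    | zero =>
      intro ν μ η hn hA
      rw [hK1 ν μ, hK1 ν η,
        show kf ν μ = 0 by omega, show kf ν η = 0 by omega]
      simpa using hA
    | succ n ih =>
      intro ν μ η hn hA
      rcases le_total μ η with hle | hle
      · by_cases hμ : ν ≤ μ
        · rw [hfix ν μ hμ, hfix ν η (le_trans hμ hle)]; exact hA
        · rw [hshift ν μ hμ]
          exact ih ν (δ μ) η (by have := hkdec ν μ hμ; omega)
            ((hδ μ).2.2 η hle hA)
      · by_cases hη : ν ≤ η
        · rw [hfix ν μ (le_trans hη hle), hfix ν η hη]; exact hA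
        · rw [hshift ν η hη]
          exact ih ν μ (δ η) (by have := hkdec ν η hη; omega)
            (G.symm _ _ ((hδ η).2.2 μ hle (G.symm _ _ hA)))
  have hadj' : ∀ ν μ η, G.Adj μ η → G.Adj (ρ ν μ) (ρ ν η) :=
    fun ν μ η hA => hadj (kf ν μ + kf ν η) ν μ η le_rfl hA
  -- composition : for ν ≤ ν', ρ ν' μ = ρ ν' (ρ ν μ)
  have hcomp : ∀ ν ν', ν ≤ ν' → ∀ μ, ρ ν' μ = ρ ν' (ρ ν μ) := by
    intro ν ν' hνν' μ
    have hk1 := hK1 ν μ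
    have hk2 := hK2 ν μ
    have hk3 := hK3 ν μ
    have hl1 := hK1 ν' μ
    have hl2 := hK2 ν' μ
    have hl3 := hK3 ν' μ
    have hm1 := hK1 ν' (ρ ν μ)
    have hm2 := hK2 ν' (ρ ν μ)
    have hm3 := hK3 ν' (ρ ν μ)
    set k := kf ν μ with hkd
    set l := kf ν' μ with hld
    set m := kf ν' (ρ ν μ) with hmd
    have hiter : ∀ j, δ^[j] (ρ ν μ) = δ^[j + k] μ := by
      intro j; rw [hk1, ← Function.iterate_add_apply]
    have hkl : k ≤ l := by
      by_contra h
      exact hk3 l (by omega) (le_trans hνν' hl2)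
    have hm : m = l - k := by
      by_contra hne
      rcases Nat.lt_or_ge m (l - k) with hlt | hgt
      · exact hl3 (m + k) (by omega) (by rw [← hiter]; exact hm2)
      · refine hm3 (l - k) (by omega) ?_
        rw [hiter]
        have : l - k + k = l := by omega
        rw [this]; exact hl2
    rw [hl1, hm1, hm, hiter]
    congr 1; omega
  refine ⟨?_, hge, hfix, hadj', ?_⟩
  · -- finiteness of iteration counts, via the strictly monotone map e
    intro ν μ
    have hstep : ∀ k : ℕ, e μ + k ≤ e (δ^[k] μ) := by
      intro k
      induction k with
      | zero => simp
      | succ k ih =>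
        rw [Function.iterate_succ_apply']
        have := he (hδ (δ^[k] μ)).1
        omega
    refine ⟨e ν, ?_⟩
    have h1 : e ν ≤ e (δ^[e ν] μ) := le_trans (by omega) (hstep (e ν))
    exact he.le_iff_le.mp h1
  · rintro ν ν' ⟨hlt, hsucc⟩ μ η hA
    have hb : G.Adj (ρ ν μ) (ρ ν η) := hadj' ν μ η hA
    rw [hcomp ν ν' hlt.le μ]
    set a := ρ ν μ with hadef
    have haν : ν ≤ a := hge ν μ
    by_cases hca : ν' ≤ a
    · rw [hfix ν' a hca]; exact hb
    · have ha : a = ν := by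
        rcases lt_or_eq_of_le haν with h | h
        · exact absurd (hsucc a h) hca
        · exact h.symm
      rw [hshift ν' a hca, ha, hfix ν' (δ ν) (hsucc _ (hδ ν).1)]
      have hνb : G.Adj ν (ρ ν η) := ha ▸ hb
      exact (hδ ν).2.2 _ (hge ν η) hνb
end
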